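/- arXiv:2004.12558 — 4 statements merged into one kernel-verified Lean document; each statement's English description precedes it below -/
import Mathlib

section
/- Let n, t, k be positive integers with n > 2k⁴t, and let F_1, …, F_t be k-uniform hypergraphs on a common vertex set of size n. If δ_1(F_i) > C(n−1, k−1) − C(n−t, k−1) for every i ∈ [t], then the family {F_1, …, F_t} admits a rainbow matching. -/
/-!
Induction on the number of families. Suppose `s + 1` families remain on `n` vertices.
If some family `F i₀` has a vertex `w` of degree above `k s C(n - 2, k - 2)`, delete `w` and `F i₀`:
every other vertex loses at most its codegree with `w`, at most `C(n - 2, k - 2)`, which is exactly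
the drop of the degree threshold by Pascal's rule. So the other families have a rainbow matching
avoiding `w`; its at most `k s` vertices lie in at most `k s C(n - 2, k - 2)` edges of `F i₀` through
`w`, leaving one to add. Otherwise every degree in `F i₀` is at most `k s C(n - 2, k - 2)`, so a
rainbow matching of the other families meets at most `(k s)² C(n - 2, k - 2)` edges of `F i₀`, fewer
than the `n s C(n - s - 1, k - 2) / k` edges that the degree condition forces when `n > 2 k⁴ (s + 1)`.
For `k = 1` every singleton is an edge of every family.
-/

open Finset

namespace Nat

theorem choose_add_mul_choose_le_choose_add (b r : ℕ) :
    ∀ d, b.choose (r + 1) + d * b.choose r ≤ (b + d).choose (r + 1)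
  | 0 => by simp
  | d + 1 => by
    have ih := choose_add_mul_choose_le_choose_add b r d
    have hmono := choose_le_choose r (le_add_right b d)
    rw [← add_assoc, choose_succ_succ']
    linarith

theorem choose_add_le_choose_add_mul_choose (b r : ℕ) :
    ∀ d, (b + d).choose (r + 1) ≤ b.choose (r + 1) + d * (b + d).choose r
  | 0 => by simp
  | d + 1 => by
    have ih := choose_add_le_choose_add_mul_choose b r d
    have hmono := choose_le_choose r (le_add_right (b + d) 1)
    rw [← add_assoc, choose_succ_succ']
    nlinarith

theorem choose_le_two_mul_choose_sub {m d r : ℕ} (h : 2 * (d + 1) * r ≤ m) :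
    m.choose r ≤ 2 * (m - d).choose r := by
  rcases r with _ | r
  · simp
  have hdm : d ≤ m := by nlinarith
  have hsplit := choose_add_le_choose_add_mul_choose (m - d) r d
  rw [Nat.sub_add_cancel hdm] at hsplit
  -- `C(m, r) (m - r) = C(m, r + 1) (r + 1)`, and `2 d (r + 1) ≤ m - r`
  have hhalf : 2 * d * m.choose r ≤ m.choose (r + 1) := by
    have hbound : 2 * d * (r + 1) + 2 * (r + 1) ≤ m := by linarith
    have hmr : 2 * d * (r + 1) ≤ m - r := by omega
    refine Nat.le_of_mul_le_mul_right ?_ (show 0 < m - r by omega)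
    calc 2 * d * m.choose r * (m - r) = 2 * d * (r + 1) * m.choose (r + 1) := by
          rw [mul_assoc, ← choose_succ_right_eq]; ring
      _ ≤ (m - r) * m.choose (r + 1) := Nat.mul_le_mul_right _ hmr
      _ = m.choose (r + 1) * (m - r) := mul_comm _ _
  linarith

end Nat

namespace RainbowMatching

/-- The inequality of the greedy step: multiplied by `k`, the left side bounds the edges meeting
`k s` vertices of degree at most `k s C(n - 2, k - 2)`, the right side the edges of a family whose
minimum degree exceeds `C(n - 1, k - 1) - C(n - s - 1, k - 1)`. -/
theorem mul_sq_mul_choose_lt {n k s : ℕ} (hk : 2 ≤ k) (hn : 2 * k ^ 4 * (s + 1) < n) :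
    k * ((k * s) ^ 2 * (n - 2).choose (k - 2)) <
      n * ((n - 1).choose (k - 1) - (n - (s + 1)).choose (k - 1) + 1) := by
  have hk4 : 16 ≤ k ^ 4 := by simpa using Nat.pow_le_pow_left hk 4
  have hk3 : 2 * k ^ 3 ≤ k ^ 4 := by rw [pow_succ, mul_comm 2]; exact Nat.mul_le_mul_left _ hk
  have hk2 : s * (k - 2) ≤ k ^ 4 * s := by
    rw [mul_comm]
    exact Nat.mul_le_mul_right s ((Nat.sub_le k 2).trans (Nat.le_self_pow (by norm_num) k))
  have hs4 : s ≤ k ^ 4 * s := Nat.le_mul_of_pos_left s (by omega)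
  have hn' : 2 * (k ^ 4 * s) + 32 < n := by linarith
  rcases s.eq_zero_or_pos with rfl | hs
  · simp only [mul_zero, zero_pow two_ne_zero, zero_mul]
    exact Nat.mul_pos (by omega) (Nat.succ_pos _)
  have hdeg : s * (n - (s + 1)).choose (k - 2) ≤
      (n - 1).choose (k - 1) - (n - (s + 1)).choose (k - 1) := by
    have := Nat.choose_add_mul_choose_le_choose_add (n - (s + 1)) (k - 2) s
    rw [show n - (s + 1) + s = n - 1 by omega, show k - 2 + 1 = k - 1 by omega] at this
    omega
  have hcodeg : (n - 2).choose (k - 2) ≤ 2 * (n - (s + 1)).choose (k - 2) := by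
    have := Nat.choose_le_two_mul_choose_sub (m := n - 2) (d := s - 1) (r := k - 2)
      (by rw [Nat.sub_add_cancel hs, mul_assoc]; omega)
    rwa [show n - 2 - (s - 1) = n - (s + 1) by omega] at this
  have hsmall : 2 * k ^ 3 * s < n := by nlinarith
  calc k * ((k * s) ^ 2 * (n - 2).choose (k - 2))
      ≤ k * ((k * s) ^ 2 * (2 * (n - (s + 1)).choose (k - 2))) := by gcongr
    _ = 2 * k ^ 3 * s * (s * (n - (s + 1)).choose (k - 2)) := by ring
    _ ≤ n * (s * (n - (s + 1)).choose (k - 2)) := by gcongr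
    _ < n * ((n - 1).choose (k - 1) - (n - (s + 1)).choose (k - 1) + 1) :=
      Nat.mul_lt_mul_of_pos_left (by omega) (by omega)

variable {α ι : Type*}

def IsRainbowMatching (G : ι → Finset (Finset α)) (I : Finset ι) (g : ι → Finset α) : Prop :=
  (∀ i ∈ I, g i ∈ G i) ∧ ∀ i ∈ I, ∀ j ∈ I, i ≠ j → Disjoint (g i) (g j)

theorem isRainbowMatching_empty (G : ι → Finset (Finset α)) (g : ι → Finset α) :
    IsRainbowMatching G ∅ g := by
  simp [IsRainbowMatching]

theorem IsRainbowMatching.mono {G G' : ι → Finset (Finset α)} {I : Finset ι} {g : ι → Finset α}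
    (hg : IsRainbowMatching G' I g) (hGG' : ∀ i ∈ I, G' i ⊆ G i) : IsRainbowMatching G I g :=
  ⟨fun i hi => hGG' i hi (hg.1 i hi), hg.2⟩

variable [DecidableEq α] {G : Finset (Finset α)} {V S : Finset α} {k : ℕ}

theorem card_filter_not_disjoint_le_sum (G : Finset (Finset α)) (S : Finset α) :
    #{e ∈ G | ¬Disjoint e S} ≤ ∑ u ∈ S, #{e ∈ G | u ∈ e} := by
  refine (card_le_card fun e he => ?_).trans card_biUnion_le
  obtain ⟨heG, heS⟩ := mem_filter.1 he
  obtain ⟨u, hue, huS⟩ := not_disjoint_iff.1 heS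
  exact mem_biUnion.2 ⟨u, huS, mem_filter.2 ⟨heG, hue⟩⟩

theorem exists_mem_disjoint_of_sum_lt (h : ∑ u ∈ S, #{e ∈ G | u ∈ e} < #G) :
    ∃ e ∈ G, Disjoint e S := by
  by_contra! hmeet
  have hle := card_filter_not_disjoint_le_sum G S
  rw [filter_true_of_mem hmeet] at hle
  exact h.not_ge hle

theorem card_mul_le_mul_card (hG : G ⊆ V.powersetCard k) {δ : ℕ}
    (hδ : ∀ v ∈ V, δ ≤ #{e ∈ G | v ∈ e}) : #V * δ ≤ k * #G := by
  refine (le_sum_card_inter hδ).trans_eq ?_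
  rw [sum_const_nat fun e he => ?_, mul_comm]
  obtain ⟨heV, hek⟩ := mem_powersetCard.1 (hG he)
  rw [inter_eq_right.2 heV, hek]

theorem card_filter_mem_and_mem_le (hG : G ⊆ V.powersetCard k) {v w : α} (hv : v ∈ V) (hw : w ∈ V)
    (hvw : v ≠ w) : #{e ∈ G | v ∈ e ∧ w ∈ e} ≤ (#V - 2).choose (k - 2) := by
  have hpair (e : Finset α) : {v, w} ⊆ e ↔ v ∈ e ∧ w ∈ e := by
    rw [insert_subset_iff, singleton_subset_iff]
  calc #{e ∈ G | v ∈ e ∧ w ∈ e} ≤ #((V \ {v, w}).powersetCard (k - 2)) := by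
        refine card_le_card_of_injOn (· \ {v, w}) (fun e he => ?_) (fun e₁ he₁ e₂ he₂ h => ?_)
        · obtain ⟨heG, hvwe⟩ := mem_filter.1 he
          obtain ⟨heV, hek⟩ := mem_powersetCard.1 (hG heG)
          refine mem_powersetCard.2 ⟨sdiff_subset_sdiff heV le_rfl, ?_⟩
          rw [card_sdiff_of_subset ((hpair e).2 hvwe), card_pair hvw, hek]
        · rw [← sdiff_union_of_subset ((hpair e₁).2 (mem_filter.1 he₁).2),
            ← sdiff_union_of_subset ((hpair e₂).2 (mem_filter.1 he₂).2)]
          exact congrArg (· ∪ {v, w}) h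
    _ = (#V - 2).choose (k - 2) := by
      rw [card_powersetCard, card_sdiff_of_subset ((hpair V).2 ⟨hv, hw⟩), card_pair hvw]

theorem sub_lt_card_filter_notMem (hk : 2 ≤ k) (hG : G ⊆ V.powersetCard k) {v w : α}
    (hv : v ∈ V) (hw : w ∈ V) (hvw : v ≠ w) {c : ℕ} (hc : c ≤ (#V - 2).choose (k - 1))
    (h : (#V - 1).choose (k - 1) - c < #{e ∈ G | v ∈ e}) :
    (#V - 2).choose (k - 1) - c < #{e ∈ {e ∈ G | w ∉ e} | v ∈ e} := by
  have hV : 2 ≤ #V := card_pair hvw ▸ card_le_card (insert_subset hv (singleton_subset_iff.2 hw))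
  have hpascal : (#V - 1).choose (k - 1) = (#V - 2).choose (k - 2) + (#V - 2).choose (k - 1) := by
    rw [show #V - 1 = #V - 2 + 1 by omega, show k - 1 = k - 2 + 1 by omega, Nat.choose_succ_succ',
      show k - 2 + 1 = k - 1 by omega]
  have hsplit := card_filter_add_card_filter_not (s := {e ∈ G | v ∈ e}) (fun e => w ∈ e)
  rw [filter_filter, filter_filter] at hsplit
  have hcodeg := card_filter_mem_and_mem_le hG hv hw hvw
  have : #{e ∈ G | w ∉ e ∧ v ∈ e} = #{e ∈ G | v ∈ e ∧ w ∉ e} := by simp only [and_comm]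
  rw [filter_filter]
  omega

theorem filter_notMem_subset_powersetCard_erase (hG : G ⊆ V.powersetCard k) (w : α) :
    {e ∈ G | w ∉ e} ⊆ (V.erase w).powersetCard k := by
  intro e he
  obtain ⟨heG, hwe⟩ := mem_filter.1 he
  obtain ⟨heV, hek⟩ := mem_powersetCard.1 (hG heG)
  exact mem_powersetCard.2 ⟨subset_erase.2 ⟨heV, hwe⟩, hek⟩

namespace IsRainbowMatching

variable {G : ι → Finset (Finset α)} {I : Finset ι} {g : ι → Finset α}

theorem biUnion_subset (hg : IsRainbowMatching G I g) (hG : ∀ i ∈ I, G i ⊆ V.powersetCard k) :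
    I.biUnion g ⊆ V :=
  Finset.biUnion_subset.2 fun i hi => (mem_powersetCard.1 (hG i hi (hg.1 i hi))).1

theorem card_biUnion_le (hg : IsRainbowMatching G I g) (hG : ∀ i ∈ I, G i ⊆ V.powersetCard k) :
    #(I.biUnion g) ≤ k * #I := by
  refine Finset.card_biUnion_le.trans_eq ?_
  rw [sum_const_nat fun i hi => (mem_powersetCard.1 (hG i hi (hg.1 i hi))).2, mul_comm]

theorem update_of_disjoint [DecidableEq ι] {i₀ : ι} (hg : IsRainbowMatching G (I.erase i₀) g)
    {e : Finset α} (he : e ∈ G i₀) (hdisj : Disjoint e ((I.erase i₀).biUnion g)) :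
    IsRainbowMatching G I (Function.update g i₀ e) := by
  have hmem {i} (hi : i ∈ I) (hi₀ : i₀ ≠ i) : i ∈ I.erase i₀ := mem_erase.2 ⟨hi₀.symm, hi⟩
  have hnew {j} (hj : j ∈ I) (hj₀ : i₀ ≠ j) : Disjoint e (g j) :=
    disjoint_of_subset_right (subset_biUnion_of_mem g (hmem hj hj₀)) hdisj
  refine ⟨fun i hi => ?_, fun i hi j hj hij => ?_⟩
  · rcases eq_or_ne i₀ i with rfl | hi₀
    · simpa using he
    · simpa [Function.update_of_ne hi₀.symm] using hg.1 i (hmem hi hi₀)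
  rcases eq_or_ne i₀ i with rfl | hi₀ <;> rcases eq_or_ne i₀ j with rfl | hj₀
  · exact absurd rfl hij
  · simpa [Function.update_of_ne hj₀.symm] using hnew hj hj₀
  · simpa [Function.update_of_ne hi₀.symm] using (hnew hi hi₀).symm
  · simpa [Function.update_of_ne hi₀.symm, Function.update_of_ne hj₀.symm] using
      hg.2 i (hmem hi hi₀) j (hmem hj hj₀) hij

end IsRainbowMatching

theorem exists_mem_disjoint_of_codegree (hG : G ⊆ V.powersetCard k) {w : α} (hw : w ∈ V)
    (hS : S ⊆ V.erase w) (h : #S * (#V - 2).choose (k - 2) < #{e ∈ G | w ∈ e}) :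
    ∃ e ∈ G, w ∈ e ∧ Disjoint e S := by
  suffices ∃ e ∈ {e ∈ G | w ∈ e}, Disjoint e S by
    obtain ⟨e, he, hdisj⟩ := this
    exact ⟨e, (mem_filter.1 he).1, (mem_filter.1 he).2, hdisj⟩
  refine exists_mem_disjoint_of_sum_lt (lt_of_le_of_lt ?_ h)
  refine sum_le_card_nsmul S _ _ fun u hu => ?_
  obtain ⟨huw, huV⟩ := mem_erase.1 (hS hu)
  rw [filter_filter]
  exact card_filter_mem_and_mem_le hG hw huV huw.symm

theorem exists_mem_disjoint_of_degree_le (hk : 2 ≤ k) {s : ℕ} (hn : 2 * k ^ 4 * (s + 1) < #V)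
    (hG : G ⊆ V.powersetCard k) (hS : S ⊆ V) (hSk : #S ≤ k * s)
    (hmax : ∀ u ∈ V, #{e ∈ G | u ∈ e} ≤ k * s * (#V - 2).choose (k - 2))
    (hdeg : ∀ v ∈ V, (#V - 1).choose (k - 1) - (#V - (s + 1)).choose (k - 1) < #{e ∈ G | v ∈ e}) :
    ∃ e ∈ G, Disjoint e S := by
  refine exists_mem_disjoint_of_sum_lt (Nat.lt_of_mul_lt_mul_left (a := k) ?_)
  calc k * ∑ u ∈ S, #{e ∈ G | u ∈ e}
      ≤ k * ((k * s) ^ 2 * (#V - 2).choose (k - 2)) := by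
        gcongr
        refine (sum_le_card_nsmul S _ _ fun u hu => hmax u (hS hu)).trans ?_
        rw [smul_eq_mul, sq, mul_assoc (k * s)]
        exact Nat.mul_le_mul_right _ hSk
    _ < #V * ((#V - 1).choose (k - 1) - (#V - (s + 1)).choose (k - 1) + 1) :=
        mul_sq_mul_choose_lt hk hn
    _ ≤ k * #G := card_mul_le_mul_card hG hdeg

theorem exists_isRainbowMatching [DecidableEq ι] (hk : 2 ≤ k) (I : Finset ι) :
    ∀ (V : Finset α) (G : ι → Finset (Finset α)), 2 * k ^ 4 * #I < #V →
      (∀ i ∈ I, G i ⊆ V.powersetCard k) →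
      (∀ i ∈ I, ∀ v ∈ V,
        (#V - 1).choose (k - 1) - (#V - #I).choose (k - 1) < #{e ∈ G i | v ∈ e}) →
      ∃ g, IsRainbowMatching G I g := by
  induction I using Finset.strongInduction with | H I ih => ?_
  intro V G hn hG hdeg
  rcases I.eq_empty_or_nonempty with rfl | ⟨i₁, hi₁⟩
  · exact ⟨fun _ => ∅, isRainbowMatching_empty G _⟩
  obtain ⟨s, hs⟩ : ∃ s, #I = s + 1 := ⟨#I - 1, by have := card_pos.2 ⟨i₁, hi₁⟩; omega⟩
  have hn' : 2 * k ^ 4 * s + 2 < #V := by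
    have : 1 ≤ k ^ 4 := Nat.one_le_pow _ _ (by omega)
    rw [hs] at hn; linarith
  by_cases hrich : ∃ i₀ ∈ I, ∃ w ∈ V, k * s * (#V - 2).choose (k - 2) < #{e ∈ G i₀ | w ∈ e}
  · obtain ⟨i₀, hi₀, w, hw, hrich⟩ := hrich
    have hIc : #(I.erase i₀) = s := by rw [card_erase_of_mem hi₀, hs]; rfl
    have hVc : #(V.erase w) = #V - 1 := card_erase_of_mem hw
    have hG' : ∀ i ∈ I.erase i₀, {e ∈ G i | w ∉ e} ⊆ (V.erase w).powersetCard k :=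
      fun i hi => filter_notMem_subset_powersetCard_erase (hG i (mem_of_mem_erase hi)) w
    obtain ⟨g, hg⟩ := ih (I.erase i₀) (erase_ssubset hi₀) (V.erase w) _ (by rw [hIc, hVc]; omega)
      hG' fun i hi v hv => by
        have hsI : 2 ≤ #I := by have := card_pos.2 ⟨i, hi⟩; omega
        rw [hVc, hIc, show #V - 1 - 1 = #V - 2 by omega, show #V - 1 - s = #V - #I by omega]
        exact sub_lt_card_filter_notMem hk (hG i (mem_of_mem_erase hi)) (mem_of_mem_erase hv) hw
          (ne_of_mem_erase hv) (Nat.choose_le_choose (k - 1) (show #V - #I ≤ #V - 2 by omega))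
          (hdeg i (mem_of_mem_erase hi) v (mem_of_mem_erase hv))
    have hScard := hIc ▸ hg.card_biUnion_le hG'
    obtain ⟨e, he, -, hdisj⟩ := exists_mem_disjoint_of_codegree (hG i₀ hi₀) hw
      (hg.biUnion_subset hG') ((Nat.mul_le_mul_right _ hScard).trans_lt hrich)
    exact ⟨_, (hg.mono fun i _ => filter_subset _ _).update_of_disjoint he hdisj⟩
  · push Not at hrich
    have hIc : #(I.erase i₁) = s := by rw [card_erase_of_mem hi₁, hs]; rfl
    have hGI : ∀ i ∈ I.erase i₁, G i ⊆ V.powersetCard k := fun i hi => hG i (mem_of_mem_erase hi)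
    obtain ⟨g, hg⟩ := ih (I.erase i₁) (erase_ssubset hi₁) V G (by rw [hIc]; omega) hGI
      fun i hi v hv => (hdeg i (mem_of_mem_erase hi) v hv).trans_le' <|
        Nat.sub_le_sub_left (Nat.choose_le_choose _ (by omega)) _
    obtain ⟨e, he, hdisj⟩ := exists_mem_disjoint_of_degree_le hk (hs ▸ hn) (hG i₁ hi₁)
      (hg.biUnion_subset hGI) (hIc ▸ hg.card_biUnion_le hGI) (hrich i₁ hi₁) (hs ▸ hdeg i₁ hi₁)
    exact ⟨_, hg.update_of_disjoint he hdisj⟩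

theorem singleton_mem_of_card_eq_one (hG : ∀ e ∈ G, #e = 1) {v : α}
    (hv : 0 < #{e ∈ G | v ∈ e}) : {v} ∈ G := by
  obtain ⟨e, he⟩ := card_pos.1 hv
  obtain ⟨heG, hve⟩ := mem_filter.1 he
  obtain ⟨a, rfl⟩ := card_eq_one.1 (hG e heG)
  rwa [mem_singleton.1 hve]

end RainbowMatching

theorem rainbow_matching_small_family_general (n t k : ℕ)
    (hk : 0 < k) (hbig : 2 * k ^ 4 * t < n)
    (F : Fin t → Finset (Finset (Fin n)))
    (huniform : ∀ i, ∀ e ∈ F i, e.card = k)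
    (hdeg : ∀ i, ∀ v : Fin n,
      Nat.choose (n - 1) (k - 1) - Nat.choose (n - t) (k - 1) <
        ((F i).filter (fun e => v ∈ e)).card) :
    ∃ g : Fin t → Finset (Fin n),
      (∀ i, g i ∈ F i) ∧ ∀ i j, i ≠ j → Disjoint (g i) (g j) := by
  rcases Nat.lt_or_ge k 2 with hk1 | hk2
  · obtain rfl : k = 1 := by omega
    have htn : t ≤ n := by simp at hbig; omega
    refine ⟨fun i => {Fin.castLE htn i}, fun i => ?_, fun i j hij => ?_⟩
    · exact RainbowMatching.singleton_mem_of_card_eq_one (huniform i) (by simpa using hdeg i _)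
    · exact disjoint_singleton.2 ((Fin.castLE_injective htn).ne hij)
  · obtain ⟨g, hg_mem, hg_disj⟩ := RainbowMatching.exists_isRainbowMatching hk2 univ univ F
      (by simpa using hbig) (fun i _ e he => mem_powersetCard_univ.2 (huniform i e he))
      (by simpa using hdeg)
    exact ⟨g, fun i => hg_mem i (mem_univ i), fun i j => hg_disj i (mem_univ i) j (mem_univ j)⟩

/-- Let `n, t, k` be positive integers with `n > 2k⁴t`, and let
`F 1, …, F t` be `k`-uniform hypergraphs on a common vertex set of size `n`
(here `Fin n`). If `δ₁(F i) > C(n-1, k-1) - C(n-t, k-1)` for every `i`, then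
the family admits a rainbow matching. -/
theorem rainbow_matching_small_family (n t k : ℕ) (hn : 0 < n) (ht : 0 < t)
    (hk : 0 < k) (hbig : 2 * k ^ 4 * t < n)
    (F : Fin t → Finset (Finset (Fin n)))
    (huniform : ∀ i, ∀ e ∈ F i, e.card = k)
    (hdeg : ∀ i, ∀ v : Fin n,
      Nat.choose (n - 1) (k - 1) - Nat.choose (n - t) (k - 1) <
        ((F i).filter (fun e => v ∈ e)).card) :
    ∃ g : Fin t → Finset (Fin n),
      (∀ i, g i ∈ F i) ∧ ∀ i j, i ≠ j → Disjoint (g i) (g j) :=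
  rainbow_matching_small_family_general n t k hk hbig F huniform hdeg
end

section
/- Let n ∈ 3ℤ be a positive integer, let H be a balanced (1,3)-partite 4-graph on 4n/3 vertices with partition classes Q, P (so |Q| = n/3 and |P| = n), and let α be a constant with 0 < α < 2^{−12}. Suppose there is a graph H_{1,3}(n, n/3) on the same vertex set, with the same class Q and with P partitioned into sets U, W with |U| = 2n/3 and |W| = n/3, such that every vertex of H is α-good with respect to H_{1,3}(n, n/3). Then H has a perfect matching. -/
/-- The extremal (1,3)-partite 4-graph `H_{1,3}(n, n/3)`: its edges are all 4-sets
`{v} ∪ e` with `v ∈ Q` and `e` a 3-subset of `P` satisfying `e ∩ W ≠ ∅` and `¬ e ⊆ W`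
(where `W ⊆ P`). Assuming `Q, P` partition the vertex set, these are exactly the sets
`s` with `|s ∩ Q| = 1`, `|s ∩ P| = 3`, `(s ∩ P) ∩ W ≠ ∅` and `¬ s ∩ P ⊆ W`. -/
def extremalH13 {V : Type*} [Fintype V] [DecidableEq V] (Q P W : Finset V) :
    Finset (Finset V) :=
  Finset.univ.filter (fun e =>
    (e ∩ Q).card = 1 ∧ (e ∩ P).card = 3 ∧ (e ∩ P ∩ W).Nonempty ∧ ¬ e ∩ P ⊆ W)

/-- The link of a vertex `v` in a hypergraph `H`: the family `{e \ {v} : v ∈ e ∈ E(H)}`. -/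
def link {V : Type*} [DecidableEq V] (H : Finset (Finset V)) (v : V) :
    Finset (Finset V) :=
  (H.filter (fun e => v ∈ e)).image (fun e => e.erase v)

open Finset

section Helpers

variable {V : Type*} [Fintype V] [DecidableEq V] [LinearOrder V]

/-- canonical quadruple shapes: one vertex in `Q`, one in `W`, two in `U`. -/
def canS (Q W U : Finset V) : Finset (Finset V) :=
  univ.filter (fun e => (e ∩ Q).card = 1 ∧ (e ∩ W).card = 1 ∧ (e ∩ U).card = 2)

noncomputable def pickMin [Nonempty V] (s : Finset V) : V :=
  if h : s.Nonempty then s.min' h else Classical.arbitrary V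

noncomputable def pickMax [Nonempty V] (s : Finset V) : V :=
  if h : s.Nonempty then s.max' h else Classical.arbitrary V

lemma pickMin_singleton [Nonempty V] (a : V) : pickMin ({a} : Finset V) = a := by
  rw [pickMin, dif_pos (singleton_nonempty a)]; exact min'_singleton a

lemma pickMin_mem [Nonempty V] {s : Finset V} (h : s.Nonempty) : pickMin s ∈ s := by
  rw [pickMin, dif_pos h]; exact min'_mem s h

lemma pickMax_mem [Nonempty V] {s : Finset V} (h : s.Nonempty) : pickMax s ∈ s := by
  rw [pickMax, dif_pos h]; exact max'_mem s h

lemma pickMin_lt_pickMax [Nonempty V] {s : Finset V} (h : 1 < s.card) :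
    pickMin s < pickMax s := by
  have hne : s.Nonempty := card_pos.mp (by omega)
  rw [pickMin, pickMax, dif_pos hne, dif_pos hne]
  exact min'_lt_max'_of_card s h

lemma eq_pair_pick [Nonempty V] {s : Finset V} (h : s.card = 2) :
    s = {pickMin s, pickMax s} := by
  have hne : s.Nonempty := card_pos.mp (by omega)
  have hlt := pickMin_lt_pickMax (s := s) (by omega)
  refine (Finset.eq_of_subset_of_card_le ?_ ?_).symm
  · intro v hv
    rcases mem_insert.mp hv with rfl | hv
    · exact pickMin_mem hne
    · rw [mem_singleton.mp hv]; exact pickMax_mem hne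
  · rw [h, card_insert_of_notMem (by simp [hlt.ne]), card_singleton]

lemma pair_eq_of_lt {a b a' b' : V} (h : ({a, b} : Finset V) = {a', b'})
    (h1 : a < b) (h2 : a' < b') : a = a' ∧ b = b' := by
  have ha : a ∈ ({a', b'} : Finset V) := h ▸ mem_insert_self a {b}
  have hb : b ∈ ({a', b'} : Finset V) := h ▸ mem_insert_of_mem (mem_singleton_self b)
  rcases mem_insert.mp ha with h' | h'
  · subst h'
    rcases mem_insert.mp hb with h'' | h''
    · exact absurd h''.symm h1.ne
    · exact ⟨rfl, mem_singleton.mp h''⟩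
  · rw [mem_singleton.mp h'] at h1 ⊢
    rcases mem_insert.mp hb with h'' | h''
    · subst h''; exact absurd h1 (lt_asymm h2)
    · rw [mem_singleton.mp h''] at h1; exact absurd h1 (lt_irrefl _)

lemma pair_eq_fix {a a' z : V} (h : ({a, z} : Finset V) = {a', z}) (ha : a ≠ z) :
    a = a' := by
  have : a ∈ ({a', z} : Finset V) := h ▸ mem_insert_self a {z}
  rcases mem_insert.mp this with h' | h'
  · exact h'
  · exact absurd (mem_singleton.mp h') ha

lemma quad_inters {Q W U : Finset V} (hQW : Disjoint Q W) (hQU : Disjoint Q U)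
    (hWU : Disjoint W U) {q w : V} {p : Finset V} (hq : q ∈ Q) (hw : w ∈ W)
    (hp : p ⊆ U) :
    insert q (insert w p) ∩ Q = {q} ∧ insert q (insert w p) ∩ W = {w} ∧
      insert q (insert w p) ∩ U = p := by
  have hwQ : w ∉ Q := disjoint_right.mp hQW hw
  have hqW : q ∉ W := disjoint_left.mp hQW hq
  have hpQ : ∀ v ∈ p, v ∉ Q := fun v hv => disjoint_right.mp hQU (hp hv)
  have hpW : ∀ v ∈ p, v ∉ W := fun v hv => disjoint_right.mp hWU (hp hv)
  have hqU : q ∉ U := disjoint_left.mp hQU hq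
  have hwU : w ∉ U := disjoint_left.mp hWU hw
  refine ⟨?_, ?_, ?_⟩
  · ext v
    simp only [mem_inter, mem_insert, mem_singleton]
    constructor
    · rintro ⟨rfl | rfl | hv, hvQ⟩
      · rfl
      · exact absurd hvQ hwQ
      · exact absurd hvQ (hpQ _ hv)
    · rintro rfl; exact ⟨Or.inl rfl, hq⟩
  · ext v
    simp only [mem_inter, mem_insert, mem_singleton]
    constructor
    · rintro ⟨rfl | rfl | hv, hvW⟩
      · exact absurd hvW hqW
      · rfl
      · exact absurd hvW (hpW _ hv)
    · rintro rfl; exact ⟨Or.inr (Or.inl rfl), hw⟩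
  · ext v
    simp only [mem_inter, mem_insert]
    constructor
    · rintro ⟨rfl | rfl | hv, hvU⟩
      · exact absurd hvU hqU
      · exact absurd hvU hwU
      · exact hv
    · intro hv; exact ⟨Or.inr (Or.inr hv), hp hv⟩

lemma quad_mem_canS {Q W U : Finset V} (hQW : Disjoint Q W) (hQU : Disjoint Q U)
    (hWU : Disjoint W U) {q w : V} {p : Finset V} (hq : q ∈ Q) (hw : w ∈ W)
    (hp : p ⊆ U) (hp2 : p.card = 2) :
    insert q (insert w p) ∈ canS Q W U := by
  obtain ⟨h1, h2, h3⟩ := quad_inters hQW hQU hWU hq hw hp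
  simp only [canS, mem_filter, mem_univ, true_and]
  exact ⟨by rw [h1]; exact card_singleton q, by rw [h2]; exact card_singleton w,
    by rw [h3]; exact hp2⟩

end Helpers

set_option linter.unusedSectionVars false
set_option maxHeartbeats 1000000

section Extend

variable {V : Type*} [Fintype V] [DecidableEq V] [LinearOrder V]

lemma extend_matching (Q W U : Finset V) (m : ℕ)
    (hQW : Disjoint Q W) (hQU : Disjoint Q U) (hWU : Disjoint W U)
    (hQ : Q.card = m) (hW : W.card = m) (hU : U.card = 2 * m)
    (H' : Finset (Finset V))
    (hbad : ∀ v : V,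
      4096 * ((canS Q W U \ H').filter (fun e => v ∈ e)).card < 27 * m ^ 3)
    (M : Finset (Finset V)) (hMsub : M ⊆ canS Q W U ∩ H')
    (hM : ∀ e ∈ M, ∀ f ∈ M, e ≠ f → Disjoint e f) (ht : M.card < m) :
    ∃ M', M' ⊆ canS Q W U ∩ H' ∧
      (∀ e ∈ M', ∀ f ∈ M', e ≠ f → Disjoint e f) ∧ M'.card = M.card + 1 := by
  classical
  have hm : 0 < m := by omega
  have hQne : Q.Nonempty := card_pos.mp (by omega)
  haveI : Nonempty V := ⟨hQne.choose⟩
  set t := M.card with htdef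
  set cov : Finset V := M.biUnion id with hcovdef
  have hmemcov : ∀ {v : V} {e : Finset V}, e ∈ M → v ∈ e → v ∈ cov :=
    fun he hv => mem_biUnion.mpr ⟨_, he, hv⟩
  have hedgeS : ∀ e ∈ M, e ∈ canS Q W U := fun e he => (mem_inter.mp (hMsub he)).1
  have hedgeH : ∀ e ∈ M, e ∈ H' := fun e he => (mem_inter.mp (hMsub he)).2
  have hshape : ∀ e ∈ M, (e ∩ Q).card = 1 ∧ (e ∩ W).card = 1 ∧ (e ∩ U).card = 2 := by
    intro e he
    have := hedgeS e he
    simpa [canS, mem_filter] using this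
  -- counting covered vertices
  have hcount : ∀ (X : Finset V) (k : ℕ), (∀ e ∈ M, (e ∩ X).card = k) →
      (X \ cov).card = X.card - k * t := by
    intro X k hk
    have h1 : X ∩ cov = M.biUnion (fun e => X ∩ e) := by
      rw [hcovdef]
      ext v
      simp only [mem_inter, mem_biUnion, id]
      tauto
    have h2 : (X ∩ cov).card = k * t := by
      rw [h1, card_biUnion (fun e he f hf hef =>
        (hM e he f hf hef).mono inter_subset_right inter_subset_right)]
      have hkk : ∀ e ∈ M, (X ∩ e).card = k := fun e he => by
        rw [inter_comm]; exact hk e he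
      rw [Finset.sum_congr rfl hkk, Finset.sum_const, smul_eq_mul, mul_comm]
    have h3 := card_inter_add_card_sdiff X cov
    omega
  have hQcov : (Q \ cov).card = m - t := by
    have := hcount Q 1 (fun e he => (hshape e he).1)
    rw [hQ] at this; omega
  have hWcov : (W \ cov).card = m - t := by
    have := hcount W 1 (fun e he => (hshape e he).2.1)
    rw [hW] at this; omega
  have hUcov : (U \ cov).card = 2 * m - 2 * t := by
    have := hcount U 2 (fun e he => (hshape e he).2.2)
    rw [hU] at this; omega
  have htle : t ≤ m := le_of_lt ht
  set s := m - t with hsdef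
  have hs1 : 1 ≤ s := by omega
  obtain ⟨x, hxmem⟩ : (Q \ cov).Nonempty := card_pos.mp (by omega)
  have hxQ : x ∈ Q := (mem_sdiff.mp hxmem).1
  have hxcov : x ∉ cov := (mem_sdiff.mp hxmem).2
  by_cases hcase : 27 * m ^ 3 ≤ 4096 * s ^ 3
  -- ================= CASE 1 : greedy extension =================
  · set E := ((W \ cov) ×ˢ (U \ cov).powersetCard 2).image
        (fun wp => insert x (insert wp.1 wp.2)) with hE
    have hprod : ∀ wp ∈ ((W \ cov) ×ˢ (U \ cov).powersetCard 2),
        wp.1 ∈ W ∧ wp.1 ∉ cov ∧ wp.2 ⊆ U ∧ (∀ v ∈ wp.2, v ∉ cov) ∧ wp.2.card = 2 := by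
      intro wp hwp
      obtain ⟨h1, h2⟩ := mem_product.mp hwp
      obtain ⟨h21, h22⟩ := mem_powersetCard.mp h2
      exact ⟨(mem_sdiff.mp h1).1, (mem_sdiff.mp h1).2,
        fun v hv => (mem_sdiff.mp (h21 hv)).1, fun v hv => (mem_sdiff.mp (h21 hv)).2, h22⟩
    have hinj : Set.InjOn (fun wp : V × Finset V => insert x (insert wp.1 wp.2))
        (((W \ cov) ×ˢ (U \ cov).powersetCard 2 : Finset (V × Finset V)) :
          Set (V × Finset V)) := by
      intro wp1 h1 wp2 h2 heq
      obtain ⟨hw1, _, hp1, _, _⟩ := hprod wp1 (mem_coe.mp h1)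
      obtain ⟨hw2, _, hp2, _, _⟩ := hprod wp2 (mem_coe.mp h2)
      obtain ⟨_, hW1, hU1⟩ := quad_inters hQW hQU hWU hxQ hw1 hp1
      obtain ⟨_, hW2, hU2⟩ := quad_inters hQW hQU hWU hxQ hw2 hp2
      simp only at heq
      have e1 : wp1.1 = wp2.1 := by
        have h := congrArg (fun g : Finset V => g ∩ W) heq
        rw [hW1, hW2] at h
        exact singleton_injective h
      have e2 : wp1.2 = wp2.2 := by
        have h := congrArg (fun g : Finset V => g ∩ U) heq
        rw [hU1, hU2] at h
        exact h
      exact Prod.ext e1 e2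
    have hcardE : E.card = s * ((2 * s).choose 2) := by
      rw [hE, card_image_of_injOn hinj, card_product, card_powersetCard, hWcov, hUcov]
      have h2s : 2 * m - 2 * t = 2 * s := by omega
      rw [h2s]
    have hchoose : s * s ≤ (2 * s).choose 2 := by
      rw [Nat.choose_two_right]
      have h1 : 2 * s * (2 * s - 1) = 2 * (s * (2 * s - 1)) := by
        rw [mul_assoc]
      rw [h1, Nat.mul_div_cancel_left _ (by norm_num : 0 < 2)]
      exact Nat.mul_le_mul_left s (by omega)
    have hE3 : s ^ 3 ≤ E.card := by
      rw [hcardE]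
      calc s ^ 3 = s * (s * s) := by ring
        _ ≤ s * ((2 * s).choose 2) := Nat.mul_le_mul_left _ hchoose
    have hES : ∀ g ∈ E, g ∈ canS Q W U ∧ x ∈ g ∧ ∀ e ∈ M, Disjoint g e := by
      intro g hg
      obtain ⟨wp, hwp, rfl⟩ := mem_image.mp hg
      obtain ⟨hw, hwc, hp, hpc, hp2⟩ := hprod wp hwp
      refine ⟨quad_mem_canS hQW hQU hWU hxQ hw hp hp2, mem_insert_self _ _, ?_⟩
      intro e he
      rw [disjoint_left]
      intro v hv hve
      have hvcov : v ∈ cov := hmemcov he hve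
      rcases mem_insert.mp hv with rfl | hv
      · exact hxcov hvcov
      rcases mem_insert.mp hv with rfl | hv
      · exact hwc hvcov
      · exact hpc v hv hvcov
    have hgoodE : ∃ g ∈ E, g ∈ H' := by
      by_contra hcon
      push_neg at hcon
      have hsubbad : E ⊆ (canS Q W U \ H').filter (fun e => x ∈ e) := by
        intro g hg
        obtain ⟨hgS, hgx, _⟩ := hES g hg
        exact mem_filter.mpr ⟨mem_sdiff.mpr ⟨hgS, hcon g hg⟩, hgx⟩
      have h1 := card_le_card hsubbad
      have h2 := hbad x
      omega
    obtain ⟨g, hgE, hgH⟩ := hgoodE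
    obtain ⟨hgS, hgx, hgdisj⟩ := hES g hgE
    have hgnotM : g ∉ M := by
      intro hgM
      exact hxcov (hmemcov hgM hgx)
    refine ⟨insert g M, ?_, ?_, ?_⟩
    · intro e he
      rcases mem_insert.mp he with rfl | he
      · exact mem_inter.mpr ⟨hgS, hgH⟩
      · exact hMsub he
    · intro e he f hf hef
      rcases mem_insert.mp he with he1 | he1 <;> rcases mem_insert.mp hf with hf1 | hf1
      · exact absurd (he1.trans hf1.symm) hef
      · subst he1; exact hgdisj f hf1
      · subst hf1; exact (hgdisj e he1).symm
      · exact hM e he1 f hf1 hef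
    · rw [card_insert_of_notMem hgnotM]
  -- ================= CASE 2 : switching =================
  · push_neg at hcase
    -- quantitative consequences
    have h16 : 16 * s < 3 * m := by
      by_contra hcon
      push_neg at hcon
      have h1 := Nat.pow_le_pow_left hcon 3
      have e1 : (3 * m) ^ 3 = 27 * m ^ 3 := by ring
      have e2 : (16 * s) ^ 3 = 4096 * s ^ 3 := by ring
      omega
    have hm6 : 6 ≤ m := by omega
    have h13 : 13 * m < 16 * t := by omega
    have ht5 : 5 ≤ t := by omega
    obtain ⟨y, hymem⟩ : (W \ cov).Nonempty := card_pos.mp (by omega)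
    have hyW : y ∈ W := (mem_sdiff.mp hymem).1
    have hycov : y ∉ cov := (mem_sdiff.mp hymem).2
    have hU2 : 1 < (U \ cov).card := by omega
    obtain ⟨z1, hz1mem, z2, hz2mem, hz12⟩ := one_lt_card.mp hU2
    have hz1U : z1 ∈ U := (mem_sdiff.mp hz1mem).1
    have hz1cov : z1 ∉ cov := (mem_sdiff.mp hz1mem).2
    have hz2U : z2 ∈ U := (mem_sdiff.mp hz2mem).1
    have hz2cov : z2 ∉ cov := (mem_sdiff.mp hz2mem).2
    -- the distinguished vertices of each matching edge
    set va : Finset V → V := fun e => pickMin (e ∩ Q) with hva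
    set vb : Finset V → V := fun e => pickMin (e ∩ W) with hvb
    set vc : Finset V → V := fun e => pickMin (e ∩ U) with hvc
    set vd : Finset V → V := fun e => pickMax (e ∩ U) with hvd
    have hedge : ∀ e ∈ M, (e ∩ Q = {va e}) ∧ (e ∩ W = {vb e}) ∧
        (e ∩ U = {vc e, vd e}) ∧ vc e < vd e := by
      intro e he
      obtain ⟨h1, h2, h3⟩ := hshape e he
      obtain ⟨qa, hqa⟩ := card_eq_one.mp h1
      obtain ⟨wb, hwb⟩ := card_eq_one.mp h2
      refine ⟨?_, ?_, eq_pair_pick h3, pickMin_lt_pickMax (by omega)⟩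
      · rw [hqa]; simp only [hva]; rw [hqa, pickMin_singleton]
      · rw [hwb]; simp only [hvb]; rw [hwb, pickMin_singleton]
    have hedgeF : ∀ e ∈ M, va e ∈ Q ∧ va e ∈ e ∧ vb e ∈ W ∧ vb e ∈ e ∧
        vc e ∈ U ∧ vc e ∈ e ∧ vd e ∈ U ∧ vd e ∈ e ∧ vc e < vd e := by
      intro e he
      obtain ⟨h1, h2, h3, h4⟩ := hedge e he
      have haa : va e ∈ e ∩ Q := by rw [h1]; exact mem_singleton_self _
      have hbb : vb e ∈ e ∩ W := by rw [h2]; exact mem_singleton_self _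
      have hcc : vc e ∈ e ∩ U := by rw [h3]; exact mem_insert_self _ _
      have hdd : vd e ∈ e ∩ U := by rw [h3]; exact mem_insert_of_mem (mem_singleton_self _)
      exact ⟨(mem_inter.mp haa).2, (mem_inter.mp haa).1, (mem_inter.mp hbb).2,
        (mem_inter.mp hbb).1, (mem_inter.mp hcc).2, (mem_inter.mp hcc).1,
        (mem_inter.mp hdd).2, (mem_inter.mp hdd).1, h4⟩
    -- ordered triples of distinct matching edges
    set T0 := (M ×ˢ M) ×ˢ M with hT0
    set Tg := T0.filter
        (fun p => p.1.1 ≠ p.1.2 ∧ p.1.1 ≠ p.2 ∧ p.1.2 ≠ p.2) with hTgdef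
    have hT0card : T0.card = t * t * t := by
      rw [hT0, card_product, card_product]
    have hTgmem : ∀ p ∈ Tg, p.1.1 ∈ M ∧ p.1.2 ∈ M ∧ p.2 ∈ M ∧
        p.1.1 ≠ p.1.2 ∧ p.1.1 ≠ p.2 ∧ p.1.2 ≠ p.2 := by
      intro p hp
      obtain ⟨hp0, h1, h2, h3⟩ := mem_filter.mp hp
      obtain ⟨h4, h5⟩ := mem_product.mp hp0
      obtain ⟨h6, h7⟩ := mem_product.mp h4
      exact ⟨h6, h7, h5, h1, h2, h3⟩
    have hTgcard : t ^ 3 ≤ Tg.card + 3 * t ^ 2 := by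
      have hsplit : Tg.card +
          (T0.filter fun p => ¬(p.1.1 ≠ p.1.2 ∧ p.1.1 ≠ p.2 ∧ p.1.2 ≠ p.2)).card
          = T0.card := by
        rw [hTgdef]
        exact Finset.card_filter_add_card_filter_not _
      have hd1 : (T0.filter fun p => p.1.1 = p.1.2).card ≤ t * t := by
        have := card_le_card_of_injOn
          (f := fun p : (Finset V × Finset V) × Finset V => (p.1.1, p.2))
          (s := T0.filter fun p => p.1.1 = p.1.2) (t := M ×ˢ M) ?_ ?_
        · rwa [card_product] at this
        · intro q hq
          obtain ⟨hq0, _⟩ := mem_filter.mp hq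
          obtain ⟨h4, h5⟩ := mem_product.mp hq0
          exact mem_product.mpr ⟨(mem_product.mp h4).1, h5⟩
        · intro q hq q' hq' hh
          obtain ⟨_, he⟩ := mem_filter.mp (mem_coe.mp hq)
          obtain ⟨_, he'⟩ := mem_filter.mp (mem_coe.mp hq')
          simp only [Prod.mk.injEq] at hh
          obtain ⟨h1, h2⟩ := hh
          exact Prod.ext (Prod.ext h1 (by rw [← he, ← he', h1])) h2
      have hd2 : (T0.filter fun p => p.1.1 = p.2).card ≤ t * t := by
        have := card_le_card_of_injOn
          (f := fun p : (Finset V × Finset V) × Finset V => (p.1.1, p.1.2))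
          (s := T0.filter fun p => p.1.1 = p.2) (t := M ×ˢ M) ?_ ?_
        · rwa [card_product] at this
        · intro q hq
          obtain ⟨hq0, _⟩ := mem_filter.mp hq
          obtain ⟨h4, _⟩ := mem_product.mp hq0
          exact h4
        · intro q hq q' hq' hh
          obtain ⟨_, he⟩ := mem_filter.mp (mem_coe.mp hq)
          obtain ⟨_, he'⟩ := mem_filter.mp (mem_coe.mp hq')
          simp only [Prod.mk.injEq] at hh
          obtain ⟨h1, h2⟩ := hh
          exact Prod.ext (Prod.ext h1 h2) (by rw [← he, ← he', h1])
      have hd3 : (T0.filter fun p => p.1.2 = p.2).card ≤ t * t := by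
        have := card_le_card_of_injOn
          (f := fun p : (Finset V × Finset V) × Finset V => (p.1.1, p.1.2))
          (s := T0.filter fun p => p.1.2 = p.2) (t := M ×ˢ M) ?_ ?_
        · rwa [card_product] at this
        · intro q hq
          obtain ⟨hq0, _⟩ := mem_filter.mp hq
          obtain ⟨h4, _⟩ := mem_product.mp hq0
          exact h4
        · intro q hq q' hq' hh
          obtain ⟨_, he⟩ := mem_filter.mp (mem_coe.mp hq)
          obtain ⟨_, he'⟩ := mem_filter.mp (mem_coe.mp hq')
          simp only [Prod.mk.injEq] at hh
          obtain ⟨h1, h2⟩ := hh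
          exact Prod.ext (Prod.ext h1 h2) (by rw [← he, ← he', h2])
      have hneg : (T0.filter fun p => ¬(p.1.1 ≠ p.1.2 ∧ p.1.1 ≠ p.2 ∧ p.1.2 ≠ p.2)).card
          ≤ 3 * (t * t) := by
        have hsub : (T0.filter fun p => ¬(p.1.1 ≠ p.1.2 ∧ p.1.1 ≠ p.2 ∧ p.1.2 ≠ p.2)) ⊆
            (T0.filter fun p => p.1.1 = p.1.2) ∪ ((T0.filter fun p => p.1.1 = p.2)
              ∪ (T0.filter fun p => p.1.2 = p.2)) := by
          intro q hq
          obtain ⟨hq0, hqn⟩ := mem_filter.mp hq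
          push_neg at hqn
          simp only [mem_union, mem_filter]
          by_cases c1 : q.1.1 = q.1.2
          · exact Or.inl ⟨hq0, c1⟩
          by_cases c2 : q.1.1 = q.2
          · exact Or.inr (Or.inl ⟨hq0, c2⟩)
          · exact Or.inr (Or.inr ⟨hq0, by tauto⟩)
        calc (T0.filter fun p => ¬(p.1.1 ≠ p.1.2 ∧ p.1.1 ≠ p.2 ∧ p.1.2 ≠ p.2)).card
            ≤ _ := card_le_card hsub
          _ ≤ _ + _ := card_union_le _ _
          _ ≤ t * t + ((T0.filter fun p => p.1.1 = p.2).card +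
              (T0.filter fun p => p.1.2 = p.2).card) := by
              gcongr
              exact card_union_le _ _
          _ ≤ 3 * (t * t) := by omega
      have ht3 : t ^ 3 = t * t * t := by ring
      have ht2 : t ^ 2 = t * t := by ring
      omega
    -- the four replacement quadruples
    set F1 : (Finset V × Finset V) × Finset V → Finset V :=
      fun p => insert x (insert (vb p.1.1) (insert (vc p.1.2) {vc p.2})) with hF1
    set F2 : (Finset V × Finset V) × Finset V → Finset V :=
      fun p => insert (va p.1.1) (insert y (insert (vd p.1.2) {vd p.2})) with hF2
    set F3 : (Finset V × Finset V) × Finset V → Finset V :=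
      fun p => insert (va p.1.2) (insert (vb p.2) (insert (vc p.1.1) {z1})) with hF3
    set F4 : (Finset V × Finset V) × Finset V → Finset V :=
      fun p => insert (va p.2) (insert (vb p.1.2) (insert (vd p.1.1) {z2})) with hF4
    have muniq : ∀ {e f : Finset V}, e ∈ M → f ∈ M → ∀ {v : V}, v ∈ e → v ∈ f →
        e = f := by
      intro e f he hf v hv hv'
      by_contra hne
      exact disjoint_left.mp (hM e he f hf hne) hv hv'
    have hgoodp : ∃ p ∈ Tg, F1 p ∈ H' ∧ F2 p ∈ H' ∧ F3 p ∈ H' ∧ F4 p ∈ H' := by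
      by_contra hcon
      push_neg at hcon
      have hcover : Tg ⊆ (Tg.filter fun p => F1 p ∉ H') ∪ (Tg.filter fun p => F2 p ∉ H')
          ∪ (Tg.filter fun p => F3 p ∉ H') ∪ (Tg.filter fun p => F4 p ∉ H') := by
        intro q hq
        simp only [mem_union, mem_filter]
        by_cases k1 : F1 q ∈ H'
        · by_cases k2 : F2 q ∈ H'
          · by_cases k3 : F3 q ∈ H'
            · exact Or.inr (⟨hq, hcon q hq k1 k2 k3⟩)
            · exact Or.inl (Or.inr ⟨hq, k3⟩)
          · exact Or.inl (Or.inl (Or.inr ⟨hq, k2⟩))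
        · exact Or.inl (Or.inl (Or.inl ⟨hq, k1⟩))
      -- bound for F1
      have hb1 : (Tg.filter fun p => F1 p ∉ H').card ≤
          2 * ((canS Q W U \ H').filter (fun e => x ∈ e)).card := by
        have hle := card_le_card_of_injOn
          (f := fun p : (Finset V × Finset V) × Finset V =>
            (F1 p, decide (vc p.1.2 < vc p.2)))
          (s := Tg.filter fun p => F1 p ∉ H')
          (t := ((canS Q W U \ H').filter (fun e => x ∈ e)) ×ˢ (univ : Finset Bool))
          ?_ ?_
        · rw [card_product] at hle
          have : (univ : Finset Bool).card = 2 := by simp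
          rw [this] at hle
          omega
        · intro q hq
          obtain ⟨hqT, hqH⟩ := mem_filter.mp hq
          obtain ⟨he1, he2, he3, hne12, hne13, hne23⟩ := hTgmem q hqT
          obtain ⟨_, _, hb1W, hb1e, _, _, _, _, _⟩ := hedgeF _ he1
          obtain ⟨_, _, _, _, hc2U, hc2e, _, _, _⟩ := hedgeF _ he2
          obtain ⟨_, _, _, _, hc3U, hc3e, _, _, _⟩ := hedgeF _ he3
          have hcc : vc q.1.2 ≠ vc q.2 := by
            intro hh
            exact disjoint_left.mp (hM _ he2 _ he3 hne23) hc2e (hh ▸ hc3e)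
          have hsubU : insert (vc q.1.2) {vc q.2} ⊆ U := by
            intro v hv
            rcases mem_insert.mp hv with rfl | hv
            · exact hc2U
            · rw [mem_singleton.mp hv]; exact hc3U
          refine mem_product.mpr ⟨mem_filter.mpr ⟨mem_sdiff.mpr ⟨?_, hqH⟩,
            mem_insert_self _ _⟩, mem_univ _⟩
          exact quad_mem_canS hQW hQU hWU hxQ hb1W hsubU
            (by rw [card_insert_of_notMem (by simp [hcc]), card_singleton])
        · intro q hq q' hq' hh
          obtain ⟨hqT, _⟩ := mem_filter.mp (mem_coe.mp hq)
          obtain ⟨hq'T, _⟩ := mem_filter.mp (mem_coe.mp hq')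
          obtain ⟨he1, he2, he3, hne12, hne13, hne23⟩ := hTgmem q hqT
          obtain ⟨hf1, hf2, hf3, hnf12, hnf13, hnf23⟩ := hTgmem q' hq'T
          obtain ⟨_, _, hb1W, hb1e, _, _, _, _, _⟩ := hedgeF _ he1
          obtain ⟨_, _, _, _, hc2U, hc2e, _, _, _⟩ := hedgeF _ he2
          obtain ⟨_, _, _, _, hc3U, hc3e, _, _, _⟩ := hedgeF _ he3
          obtain ⟨_, _, hb1W', hb1e', _, _, _, _, _⟩ := hedgeF _ hf1
          obtain ⟨_, _, _, _, hc2U', hc2e', _, _, _⟩ := hedgeF _ hf2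
          obtain ⟨_, _, _, _, hc3U', hc3e', _, _, _⟩ := hedgeF _ hf3
          have hcc : vc q.1.2 ≠ vc q.2 := by
            intro hh2
            exact disjoint_left.mp (hM _ he2 _ he3 hne23) hc2e (hh2 ▸ hc3e)
          have hcc' : vc q'.1.2 ≠ vc q'.2 := by
            intro hh2
            exact disjoint_left.mp (hM _ hf2 _ hf3 hnf23) hc2e' (hh2 ▸ hc3e')
          have hsubU : insert (vc q.1.2) {vc q.2} ⊆ U := by
            intro v hv
            rcases mem_insert.mp hv with rfl | hv
            · exact hc2U
            · rw [mem_singleton.mp hv]; exact hc3U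
          have hsubU' : insert (vc q'.1.2) {vc q'.2} ⊆ U := by
            intro v hv
            rcases mem_insert.mp hv with rfl | hv
            · exact hc2U'
            · rw [mem_singleton.mp hv]; exact hc3U'
          have hI := quad_inters hQW hQU hWU hxQ hb1W hsubU
          have hI' := quad_inters hQW hQU hWU hxQ hb1W' hsubU'
          simp only [Prod.mk.injEq] at hh
          obtain ⟨hFeq, hbit⟩ := hh
          simp only [hF1] at hFeq
          have hbeq : vb q.1.1 = vb q'.1.1 :=
            singleton_injective (by rw [← hI.2.1, ← hI'.2.1, hFeq])
          have he11 : q.1.1 = q'.1.1 :=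
            muniq he1 hf1 hb1e (by rw [hbeq]; exact hb1e')
          have hUeq : (insert (vc q.1.2) {vc q.2} : Finset V)
              = insert (vc q'.1.2) {vc q'.2} := by
            rw [← hI.2.2, ← hI'.2.2, hFeq]
          have hiff : (vc q.1.2 < vc q.2) ↔ (vc q'.1.2 < vc q'.2) :=
            decide_eq_decide.mp hbit
          by_cases hlt : vc q.1.2 < vc q.2
          · obtain ⟨hA, hB⟩ := pair_eq_of_lt hUeq hlt (hiff.mp hlt)
            have he22 : q.1.2 = q'.1.2 := muniq he2 hf2 hc2e (by rw [hA]; exact hc2e')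
            have he33 : q.2 = q'.2 := muniq he3 hf3 hc3e (by rw [hB]; exact hc3e')
            exact Prod.ext (Prod.ext he11 he22) he33
          · have hgt : vc q.2 < vc q.1.2 :=
              lt_of_le_of_ne (not_lt.mp hlt) (Ne.symm hcc)
            have hgt' : vc q'.2 < vc q'.1.2 :=
              lt_of_le_of_ne (not_lt.mp (fun hh2 => hlt (hiff.mpr hh2))) (Ne.symm hcc')
            rw [pair_comm (vc q.1.2) (vc q.2), pair_comm (vc q'.1.2) (vc q'.2)] at hUeq
            obtain ⟨hB, hA⟩ := pair_eq_of_lt hUeq hgt hgt'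
            have he22 : q.1.2 = q'.1.2 := muniq he2 hf2 hc2e (by rw [hA]; exact hc2e')
            have he33 : q.2 = q'.2 := muniq he3 hf3 hc3e (by rw [hB]; exact hc3e')
            exact Prod.ext (Prod.ext he11 he22) he33
      -- bound for F2
      have hb2 : (Tg.filter fun p => F2 p ∉ H').card ≤
          2 * ((canS Q W U \ H').filter (fun e => y ∈ e)).card := by
        have hle := card_le_card_of_injOn
          (f := fun p : (Finset V × Finset V) × Finset V =>
            (F2 p, decide (vd p.1.2 < vd p.2)))
          (s := Tg.filter fun p => F2 p ∉ H')
          (t := ((canS Q W U \ H').filter (fun e => y ∈ e)) ×ˢ (univ : Finset Bool))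
          ?_ ?_
        · rw [card_product] at hle
          have : (univ : Finset Bool).card = 2 := by simp
          rw [this] at hle
          omega
        · intro q hq
          obtain ⟨hqT, hqH⟩ := mem_filter.mp hq
          obtain ⟨he1, he2, he3, hne12, hne13, hne23⟩ := hTgmem q hqT
          obtain ⟨ha1Q, ha1e, _, _, _, _, _, _, _⟩ := hedgeF _ he1
          obtain ⟨_, _, _, _, _, _, hd2U, hd2e, _⟩ := hedgeF _ he2
          obtain ⟨_, _, _, _, _, _, hd3U, hd3e, _⟩ := hedgeF _ he3
          have hcc : vd q.1.2 ≠ vd q.2 := by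
            intro hh
            exact disjoint_left.mp (hM _ he2 _ he3 hne23) hd2e (hh ▸ hd3e)
          have hsubU : insert (vd q.1.2) {vd q.2} ⊆ U := by
            intro v hv
            rcases mem_insert.mp hv with rfl | hv
            · exact hd2U
            · rw [mem_singleton.mp hv]; exact hd3U
          refine mem_product.mpr ⟨mem_filter.mpr ⟨mem_sdiff.mpr ⟨?_, hqH⟩,
            mem_insert_of_mem (mem_insert_self _ _)⟩, mem_univ _⟩
          exact quad_mem_canS hQW hQU hWU ha1Q hyW hsubU
            (by rw [card_insert_of_notMem (by simp [hcc]), card_singleton])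
        · intro q hq q' hq' hh
          obtain ⟨hqT, _⟩ := mem_filter.mp (mem_coe.mp hq)
          obtain ⟨hq'T, _⟩ := mem_filter.mp (mem_coe.mp hq')
          obtain ⟨he1, he2, he3, hne12, hne13, hne23⟩ := hTgmem q hqT
          obtain ⟨hf1, hf2, hf3, hnf12, hnf13, hnf23⟩ := hTgmem q' hq'T
          obtain ⟨ha1Q, ha1e, _, _, _, _, _, _, _⟩ := hedgeF _ he1
          obtain ⟨_, _, _, _, _, _, hd2U, hd2e, _⟩ := hedgeF _ he2
          obtain ⟨_, _, _, _, _, _, hd3U, hd3e, _⟩ := hedgeF _ he3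
          obtain ⟨ha1Q', ha1e', _, _, _, _, _, _, _⟩ := hedgeF _ hf1
          obtain ⟨_, _, _, _, _, _, hd2U', hd2e', _⟩ := hedgeF _ hf2
          obtain ⟨_, _, _, _, _, _, hd3U', hd3e', _⟩ := hedgeF _ hf3
          have hcc : vd q.1.2 ≠ vd q.2 := by
            intro hh2
            exact disjoint_left.mp (hM _ he2 _ he3 hne23) hd2e (hh2 ▸ hd3e)
          have hcc' : vd q'.1.2 ≠ vd q'.2 := by
            intro hh2
            exact disjoint_left.mp (hM _ hf2 _ hf3 hnf23) hd2e' (hh2 ▸ hd3e')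
          have hsubU : insert (vd q.1.2) {vd q.2} ⊆ U := by
            intro v hv
            rcases mem_insert.mp hv with rfl | hv
            · exact hd2U
            · rw [mem_singleton.mp hv]; exact hd3U
          have hsubU' : insert (vd q'.1.2) {vd q'.2} ⊆ U := by
            intro v hv
            rcases mem_insert.mp hv with rfl | hv
            · exact hd2U'
            · rw [mem_singleton.mp hv]; exact hd3U'
          have hI := quad_inters hQW hQU hWU ha1Q hyW hsubU
          have hI' := quad_inters hQW hQU hWU ha1Q' hyW hsubU'
          simp only [Prod.mk.injEq] at hh
          obtain ⟨hFeq, hbit⟩ := hh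
          simp only [hF2] at hFeq
          have haeq : va q.1.1 = va q'.1.1 :=
            singleton_injective (by rw [← hI.1, ← hI'.1, hFeq])
          have he11 : q.1.1 = q'.1.1 :=
            muniq he1 hf1 ha1e (by rw [haeq]; exact ha1e')
          have hUeq : (insert (vd q.1.2) {vd q.2} : Finset V)
              = insert (vd q'.1.2) {vd q'.2} := by
            rw [← hI.2.2, ← hI'.2.2, hFeq]
          have hiff : (vd q.1.2 < vd q.2) ↔ (vd q'.1.2 < vd q'.2) :=
            decide_eq_decide.mp hbit
          by_cases hlt : vd q.1.2 < vd q.2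
          · obtain ⟨hA, hB⟩ := pair_eq_of_lt hUeq hlt (hiff.mp hlt)
            have he22 : q.1.2 = q'.1.2 := muniq he2 hf2 hd2e (by rw [hA]; exact hd2e')
            have he33 : q.2 = q'.2 := muniq he3 hf3 hd3e (by rw [hB]; exact hd3e')
            exact Prod.ext (Prod.ext he11 he22) he33
          · have hgt : vd q.2 < vd q.1.2 :=
              lt_of_le_of_ne (not_lt.mp hlt) (Ne.symm hcc)
            have hgt' : vd q'.2 < vd q'.1.2 :=
              lt_of_le_of_ne (not_lt.mp (fun hh2 => hlt (hiff.mpr hh2))) (Ne.symm hcc')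
            rw [pair_comm (vd q.1.2) (vd q.2), pair_comm (vd q'.1.2) (vd q'.2)] at hUeq
            obtain ⟨hB, hA⟩ := pair_eq_of_lt hUeq hgt hgt'
            have he22 : q.1.2 = q'.1.2 := muniq he2 hf2 hd2e (by rw [hA]; exact hd2e')
            have he33 : q.2 = q'.2 := muniq he3 hf3 hd3e (by rw [hB]; exact hd3e')
            exact Prod.ext (Prod.ext he11 he22) he33
      -- bound for F3
      have hb3 : (Tg.filter fun p => F3 p ∉ H').card ≤
          ((canS Q W U \ H').filter (fun e => z1 ∈ e)).card := by
        apply card_le_card_of_injOn (f := F3) ?_ ?_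
        · intro q hq
          obtain ⟨hqT, hqH⟩ := mem_filter.mp hq
          obtain ⟨he1, he2, he3, hne12, hne13, hne23⟩ := hTgmem q hqT
          obtain ⟨_, _, _, _, hc1U, hc1e, _, _, _⟩ := hedgeF _ he1
          obtain ⟨ha2Q, ha2e, _, _, _, _, _, _, _⟩ := hedgeF _ he2
          obtain ⟨_, _, hb3W, hb3e, _, _, _, _, _⟩ := hedgeF _ he3
          have hcz : vc q.1.1 ≠ z1 := by
            intro hh
            exact hz1cov (hh ▸ hmemcov he1 hc1e)
          have hsubU : insert (vc q.1.1) {z1} ⊆ U := by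
            intro v hv
            rcases mem_insert.mp hv with rfl | hv
            · exact hc1U
            · rw [mem_singleton.mp hv]; exact hz1U
          refine mem_filter.mpr ⟨mem_sdiff.mpr ⟨?_, hqH⟩, ?_⟩
          · exact quad_mem_canS hQW hQU hWU ha2Q hb3W hsubU
              (by rw [card_insert_of_notMem (by simp [hcz]), card_singleton])
          · simp only [hF3]
            exact mem_insert_of_mem (mem_insert_of_mem
              (mem_insert_of_mem (mem_singleton_self _)))
        · intro q hq q' hq' hFeq
          obtain ⟨hqT, _⟩ := mem_filter.mp (mem_coe.mp hq)
          obtain ⟨hq'T, _⟩ := mem_filter.mp (mem_coe.mp hq')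
          obtain ⟨he1, he2, he3, hne12, hne13, hne23⟩ := hTgmem q hqT
          obtain ⟨hf1, hf2, hf3, hnf12, hnf13, hnf23⟩ := hTgmem q' hq'T
          obtain ⟨_, _, _, _, hc1U, hc1e, _, _, _⟩ := hedgeF _ he1
          obtain ⟨ha2Q, ha2e, _, _, _, _, _, _, _⟩ := hedgeF _ he2
          obtain ⟨_, _, hb3W, hb3e, _, _, _, _, _⟩ := hedgeF _ he3
          obtain ⟨_, _, _, _, hc1U', hc1e', _, _, _⟩ := hedgeF _ hf1
          obtain ⟨ha2Q', ha2e', _, _, _, _, _, _, _⟩ := hedgeF _ hf2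
          obtain ⟨_, _, hb3W', hb3e', _, _, _, _, _⟩ := hedgeF _ hf3
          have hcz : vc q.1.1 ≠ z1 := by
            intro hh
            exact hz1cov (hh ▸ hmemcov he1 hc1e)
          have hcz' : vc q'.1.1 ≠ z1 := by
            intro hh
            exact hz1cov (hh ▸ hmemcov hf1 hc1e')
          have hsubU : insert (vc q.1.1) {z1} ⊆ U := by
            intro v hv
            rcases mem_insert.mp hv with rfl | hv
            · exact hc1U
            · rw [mem_singleton.mp hv]; exact hz1U
          have hsubU' : insert (vc q'.1.1) {z1} ⊆ U := by
            intro v hv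
            rcases mem_insert.mp hv with rfl | hv
            · exact hc1U'
            · rw [mem_singleton.mp hv]; exact hz1U
          have hI := quad_inters hQW hQU hWU ha2Q hb3W hsubU
          have hI' := quad_inters hQW hQU hWU ha2Q' hb3W' hsubU'
          simp only [hF3] at hFeq
          have haeq : va q.1.2 = va q'.1.2 :=
            singleton_injective (by rw [← hI.1, ← hI'.1, hFeq])
          have he22 : q.1.2 = q'.1.2 :=
            muniq he2 hf2 ha2e (by rw [haeq]; exact ha2e')
          have hbeq : vb q.2 = vb q'.2 :=
            singleton_injective (by rw [← hI.2.1, ← hI'.2.1, hFeq])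
          have he33 : q.2 = q'.2 :=
            muniq he3 hf3 hb3e (by rw [hbeq]; exact hb3e')
          have hUeq : (insert (vc q.1.1) {z1} : Finset V)
              = insert (vc q'.1.1) {z1} := by
            rw [← hI.2.2, ← hI'.2.2, hFeq]
          have hceq : vc q.1.1 = vc q'.1.1 := pair_eq_fix hUeq hcz
          have he11 : q.1.1 = q'.1.1 :=
            muniq he1 hf1 hc1e (by rw [hceq]; exact hc1e')
          exact Prod.ext (Prod.ext he11 he22) he33
      -- bound for F4
      have hb4 : (Tg.filter fun p => F4 p ∉ H').card ≤
          ((canS Q W U \ H').filter (fun e => z2 ∈ e)).card := by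
        apply card_le_card_of_injOn (f := F4) ?_ ?_
        · intro q hq
          obtain ⟨hqT, hqH⟩ := mem_filter.mp hq
          obtain ⟨he1, he2, he3, hne12, hne13, hne23⟩ := hTgmem q hqT
          obtain ⟨_, _, _, _, _, _, hd1U, hd1e, _⟩ := hedgeF _ he1
          obtain ⟨_, _, hb2W, hb2e, _, _, _, _, _⟩ := hedgeF _ he2
          obtain ⟨ha3Q, ha3e, _, _, _, _, _, _, _⟩ := hedgeF _ he3
          have hcz : vd q.1.1 ≠ z2 := by
            intro hh
            exact hz2cov (hh ▸ hmemcov he1 hd1e)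
          have hsubU : insert (vd q.1.1) {z2} ⊆ U := by
            intro v hv
            rcases mem_insert.mp hv with rfl | hv
            · exact hd1U
            · rw [mem_singleton.mp hv]; exact hz2U
          refine mem_filter.mpr ⟨mem_sdiff.mpr ⟨?_, hqH⟩, ?_⟩
          · exact quad_mem_canS hQW hQU hWU ha3Q hb2W hsubU
              (by rw [card_insert_of_notMem (by simp [hcz]), card_singleton])
          · simp only [hF4]
            exact mem_insert_of_mem (mem_insert_of_mem
              (mem_insert_of_mem (mem_singleton_self _)))
        · intro q hq q' hq' hFeq
          obtain ⟨hqT, _⟩ := mem_filter.mp (mem_coe.mp hq)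
          obtain ⟨hq'T, _⟩ := mem_filter.mp (mem_coe.mp hq')
          obtain ⟨he1, he2, he3, hne12, hne13, hne23⟩ := hTgmem q hqT
          obtain ⟨hf1, hf2, hf3, hnf12, hnf13, hnf23⟩ := hTgmem q' hq'T
          obtain ⟨_, _, _, _, _, _, hd1U, hd1e, _⟩ := hedgeF _ he1
          obtain ⟨_, _, hb2W, hb2e, _, _, _, _, _⟩ := hedgeF _ he2
          obtain ⟨ha3Q, ha3e, _, _, _, _, _, _, _⟩ := hedgeF _ he3
          obtain ⟨_, _, _, _, _, _, hd1U', hd1e', _⟩ := hedgeF _ hf1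
          obtain ⟨_, _, hb2W', hb2e', _, _, _, _, _⟩ := hedgeF _ hf2
          obtain ⟨ha3Q', ha3e', _, _, _, _, _, _, _⟩ := hedgeF _ hf3
          have hcz : vd q.1.1 ≠ z2 := by
            intro hh
            exact hz2cov (hh ▸ hmemcov he1 hd1e)
          have hcz' : vd q'.1.1 ≠ z2 := by
            intro hh
            exact hz2cov (hh ▸ hmemcov hf1 hd1e')
          have hsubU : insert (vd q.1.1) {z2} ⊆ U := by
            intro v hv
            rcases mem_insert.mp hv with rfl | hv
            · exact hd1U
            · rw [mem_singleton.mp hv]; exact hz2U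
          have hsubU' : insert (vd q'.1.1) {z2} ⊆ U := by
            intro v hv
            rcases mem_insert.mp hv with rfl | hv
            · exact hd1U'
            · rw [mem_singleton.mp hv]; exact hz2U
          have hI := quad_inters hQW hQU hWU ha3Q hb2W hsubU
          have hI' := quad_inters hQW hQU hWU ha3Q' hb2W' hsubU'
          simp only [hF4] at hFeq
          have haeq : va q.2 = va q'.2 :=
            singleton_injective (by rw [← hI.1, ← hI'.1, hFeq])
          have he33 : q.2 = q'.2 :=
            muniq he3 hf3 ha3e (by rw [haeq]; exact ha3e')
          have hbeq : vb q.1.2 = vb q'.1.2 :=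
            singleton_injective (by rw [← hI.2.1, ← hI'.2.1, hFeq])
          have he22 : q.1.2 = q'.1.2 :=
            muniq he2 hf2 hb2e (by rw [hbeq]; exact hb2e')
          have hUeq : (insert (vd q.1.1) {z2} : Finset V)
              = insert (vd q'.1.1) {z2} := by
            rw [← hI.2.2, ← hI'.2.2, hFeq]
          have hdeq : vd q.1.1 = vd q'.1.1 := pair_eq_fix hUeq hcz
          have he11 : q.1.1 = q'.1.1 :=
            muniq he1 hf1 hd1e (by rw [hdeq]; exact hd1e')
          exact Prod.ext (Prod.ext he11 he22) he33
      -- final arithmetic contradiction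
      have hcard : Tg.card ≤ (Tg.filter fun p => F1 p ∉ H').card
          + (Tg.filter fun p => F2 p ∉ H').card
          + (Tg.filter fun p => F3 p ∉ H').card
          + (Tg.filter fun p => F4 p ∉ H').card := by
        calc Tg.card ≤ _ := card_le_card hcover
          _ ≤ _ + (Tg.filter fun p => F4 p ∉ H').card := card_union_le _ _
          _ ≤ _ := by
            gcongr
            calc _ ≤ _ + (Tg.filter fun p => F3 p ∉ H').card := card_union_le _ _
              _ ≤ _ := by
                gcongr
                exact card_union_le _ _
      have hbx := hbad x
      have hby := hbad y
      have hbz1 := hbad z1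
      have hbz2 := hbad z2
      -- 4096 * Tg.card ≤ 162 m^3 - 6 while Tg.card ≥ t^3 - 3 t^2 and t large
      have hp1 : 2197 * m ^ 3 < 4096 * t ^ 3 := by
        have h1 : (13 * m) ^ 3 < (16 * t) ^ 3 := Nat.pow_lt_pow_left h13 (by norm_num)
        have e1 : (13 * m) ^ 3 = 2197 * m ^ 3 := by ring
        have e2 : (16 * t) ^ 3 = 4096 * t ^ 3 := by ring
        omega
      have ht2m : t ^ 2 ≤ m ^ 2 := Nat.pow_le_pow_left htle 2
      by_cases hm7 : 7 ≤ m
      · have hmm : 14245 * m ^ 2 ≤ 2035 * m ^ 3 := by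
          have h1 : m ^ 2 * 7 ≤ m ^ 2 * m := Nat.mul_le_mul_left _ hm7
          have h2 : m ^ 2 * m = m ^ 3 := by ring
          omega
        omega
      · have hm6' : m = 6 := by omega
        have ht' : t = 5 := by omega
        have e1 : t ^ 3 = 125 := by rw [ht']; norm_num
        have e2 : t ^ 2 = 25 := by rw [ht']; norm_num
        have e3 : m ^ 3 = 216 := by rw [hm6']; norm_num
        omega
    obtain ⟨p, hpTg, hFH1, hFH2, hFH3, hFH4⟩ := hgoodp
    obtain ⟨he1, he2, he3, hne12, hne13, hne23⟩ := hTgmem p hpTg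
    have hne21 : p.1.2 ≠ p.1.1 := Ne.symm hne12
    have hne31 : p.2 ≠ p.1.1 := Ne.symm hne13
    have hne32 : p.2 ≠ p.1.2 := Ne.symm hne23
    obtain ⟨ha1Q, ha1e, hb1W, hb1e, hc1U, hc1e, hd1U, hd1e, hcd1⟩ := hedgeF _ he1
    obtain ⟨ha2Q, ha2e, hb2W, hb2e, hc2U, hc2e, hd2U, hd2e, hcd2⟩ := hedgeF _ he2
    obtain ⟨ha3Q, ha3e, hb3W, hb3e, hc3U, hc3e, hd3U, hd3e, hcd3⟩ := hedgeF _ he3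
    -- closers for the distinctness case bash
    have nQW : ∀ {u v : V}, u ∈ Q → v ∈ W → u = v → False := by
      intro u v hu hv h; subst h; exact disjoint_left.mp hQW hu hv
    have nQU : ∀ {u v : V}, u ∈ Q → v ∈ U → u = v → False := by
      intro u v hu hv h; subst h; exact disjoint_left.mp hQU hu hv
    have nWU : ∀ {u v : V}, u ∈ W → v ∈ U → u = v → False := by
      intro u v hu hv h; subst h; exact disjoint_left.mp hWU hu hv
    have nWQ : ∀ {u v : V}, u ∈ W → v ∈ Q → u = v → False :=
      fun hu hv h => nQW hv hu h.symm
    have nUQ : ∀ {u v : V}, u ∈ U → v ∈ Q → u = v → False :=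
      fun hu hv h => nQU hv hu h.symm
    have nUW : ∀ {u v : V}, u ∈ U → v ∈ W → u = v → False :=
      fun hu hv h => nWU hv hu h.symm
    have nEdge : ∀ {u v : V} {e f : Finset V}, e ∈ M → f ∈ M → e ≠ f → u ∈ e →
        v ∈ f → u = v → False := by
      intro u v e f he hf hnef hu hv h
      subst h
      exact disjoint_left.mp (hM e he f hf hnef) hu hv
    have nCovL : ∀ {u v : V} {e : Finset V}, e ∈ M → u ∈ e → v ∉ cov →
        u = v → False := by
      intro u v e he hu hv h
      subst h
      exact hv (hmemcov he hu)
    have nCovR : ∀ {u v : V} {e : Finset V}, e ∈ M → u ∈ e → v ∉ cov →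
        v = u → False := fun he hu hv h => nCovL he hu hv h.symm
    have nMM : ∀ {e : Finset V}, e ∈ M → vc e = vd e → False :=
      fun he h => absurd h (ne_of_lt (hedgeF _ he).2.2.2.2.2.2.2.2)
    have nMM' : ∀ {e : Finset V}, e ∈ M → vd e = vc e → False :=
      fun he h => nMM he h.symm
    have nz : z1 = z2 → False := hz12
    have nz' : z2 = z1 → False := fun h => hz12 h.symm
    -- pairwise disjointness of the new quadruples
    have d12 : Disjoint (F1 p) (F2 p) := by
      rw [disjoint_left]
      intro v hv1 hv2
      simp only [hF1, hF2, mem_insert, mem_singleton] at hv1 hv2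
      rcases hv1 with rfl | rfl | rfl | rfl <;> rcases hv2 with h | h | h | h
      exacts [nCovR he1 ha1e hxcov h,
        nQW hxQ hyW h,
        nQU hxQ hd2U h,
        nQU hxQ hd3U h,
        nWQ hb1W ha1Q h,
        nCovL he1 hb1e hycov h,
        nWU hb1W hd2U h,
        nWU hb1W hd3U h,
        nUQ hc2U ha1Q h,
        nUW hc2U hyW h,
        nMM he2 h,
        nEdge he2 he3 hne23 hc2e hd3e h,
        nUQ hc3U ha1Q h,
        nUW hc3U hyW h,
        nEdge he3 he2 hne32 hc3e hd2e h,
        nMM he3 h]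
    have d13 : Disjoint (F1 p) (F3 p) := by
      rw [disjoint_left]
      intro v hv1 hv2
      simp only [hF1, hF3, mem_insert, mem_singleton] at hv1 hv2
      rcases hv1 with rfl | rfl | rfl | rfl <;> rcases hv2 with h | h | h | h
      exacts [nCovR he2 ha2e hxcov h,
        nQW hxQ hb3W h,
        nQU hxQ hc1U h,
        nQU hxQ hz1U h,
        nWQ hb1W ha2Q h,
        nEdge he1 he3 hne13 hb1e hb3e h,
        nWU hb1W hc1U h,
        nWU hb1W hz1U h,
        nUQ hc2U ha2Q h,
        nUW hc2U hb3W h,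
        nEdge he2 he1 hne21 hc2e hc1e h,
        nCovL he2 hc2e hz1cov h,
        nUQ hc3U ha2Q h,
        nUW hc3U hb3W h,
        nEdge he3 he1 hne31 hc3e hc1e h,
        nCovL he3 hc3e hz1cov h]
    have d14 : Disjoint (F1 p) (F4 p) := by
      rw [disjoint_left]
      intro v hv1 hv2
      simp only [hF1, hF4, mem_insert, mem_singleton] at hv1 hv2
      rcases hv1 with rfl | rfl | rfl | rfl <;> rcases hv2 with h | h | h | h
      exacts [nCovR he3 ha3e hxcov h,
        nQW hxQ hb2W h,
        nQU hxQ hd1U h,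
        nQU hxQ hz2U h,
        nWQ hb1W ha3Q h,
        nEdge he1 he2 hne12 hb1e hb2e h,
        nWU hb1W hd1U h,
        nWU hb1W hz2U h,
        nUQ hc2U ha3Q h,
        nUW hc2U hb2W h,
        nEdge he2 he1 hne21 hc2e hd1e h,
        nCovL he2 hc2e hz2cov h,
        nUQ hc3U ha3Q h,
        nUW hc3U hb2W h,
        nEdge he3 he1 hne31 hc3e hd1e h,
        nCovL he3 hc3e hz2cov h]
    have d23 : Disjoint (F2 p) (F3 p) := by
      rw [disjoint_left]
      intro v hv1 hv2
      simp only [hF2, hF3, mem_insert, mem_singleton] at hv1 hv2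
      rcases hv1 with rfl | rfl | rfl | rfl <;> rcases hv2 with h | h | h | h
      exacts [nEdge he1 he2 hne12 ha1e ha2e h,
        nQW ha1Q hb3W h,
        nQU ha1Q hc1U h,
        nQU ha1Q hz1U h,
        nWQ hyW ha2Q h,
        nCovR he3 hb3e hycov h,
        nWU hyW hc1U h,
        nWU hyW hz1U h,
        nUQ hd2U ha2Q h,
        nUW hd2U hb3W h,
        nEdge he2 he1 hne21 hd2e hc1e h,
        nCovL he2 hd2e hz1cov h,
        nUQ hd3U ha2Q h,
        nUW hd3U hb3W h,
        nEdge he3 he1 hne31 hd3e hc1e h,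
        nCovL he3 hd3e hz1cov h]
    have d24 : Disjoint (F2 p) (F4 p) := by
      rw [disjoint_left]
      intro v hv1 hv2
      simp only [hF2, hF4, mem_insert, mem_singleton] at hv1 hv2
      rcases hv1 with rfl | rfl | rfl | rfl <;> rcases hv2 with h | h | h | h
      exacts [nEdge he1 he3 hne13 ha1e ha3e h,
        nQW ha1Q hb2W h,
        nQU ha1Q hd1U h,
        nQU ha1Q hz2U h,
        nWQ hyW ha3Q h,
        nCovR he2 hb2e hycov h,
        nWU hyW hd1U h,
        nWU hyW hz2U h,
        nUQ hd2U ha3Q h,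
        nUW hd2U hb2W h,
        nEdge he2 he1 hne21 hd2e hd1e h,
        nCovL he2 hd2e hz2cov h,
        nUQ hd3U ha3Q h,
        nUW hd3U hb2W h,
        nEdge he3 he1 hne31 hd3e hd1e h,
        nCovL he3 hd3e hz2cov h]
    have d34 : Disjoint (F3 p) (F4 p) := by
      rw [disjoint_left]
      intro v hv1 hv2
      simp only [hF3, hF4, mem_insert, mem_singleton] at hv1 hv2
      rcases hv1 with rfl | rfl | rfl | rfl <;> rcases hv2 with h | h | h | h
      exacts [nEdge he2 he3 hne23 ha2e ha3e h,
        nQW ha2Q hb2W h,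
        nQU ha2Q hd1U h,
        nQU ha2Q hz2U h,
        nWQ hb3W ha3Q h,
        nEdge he3 he2 hne32 hb3e hb2e h,
        nWU hb3W hd1U h,
        nWU hb3W hz2U h,
        nUQ hc1U ha3Q h,
        nUW hc1U hb2W h,
        nMM he1 h,
        nCovL he1 hc1e hz2cov h,
        nUQ hz1U ha3Q h,
        nUW hz1U hb2W h,
        nCovR he1 hd1e hz1cov h,
        nz h]
    -- new quadruples are disjoint from the untouched matching edges
    have hFdisjM : ∀ g ∈ M, g ≠ p.1.1 → g ≠ p.1.2 → g ≠ p.2 →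
        Disjoint (F1 p) g ∧ Disjoint (F2 p) g ∧ Disjoint (F3 p) g ∧
          Disjoint (F4 p) g := by
      intro g hg hg1 hg2 hg3
      have key : ∀ u : V, (u ∉ cov ∨ u ∈ p.1.1 ∨ u ∈ p.1.2 ∨ u ∈ p.2) → u ∉ g := by
        intro u hu hug
        rcases hu with h | h | h | h
        · exact h (hmemcov hg hug)
        · exact disjoint_left.mp (hM _ he1 _ hg (Ne.symm hg1)) h hug
        · exact disjoint_left.mp (hM _ he2 _ hg (Ne.symm hg2)) h hug
        · exact disjoint_left.mp (hM _ he3 _ hg (Ne.symm hg3)) h hug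
      refine ⟨?_, ?_, ?_, ?_⟩
      · rw [disjoint_left]
        intro v hv1 hv2
        simp only [hF1, mem_insert, mem_singleton] at hv1
        rcases hv1 with rfl | rfl | rfl | rfl
        exacts [key _ (Or.inl hxcov) hv2, key _ (Or.inr (Or.inl hb1e)) hv2,
          key _ (Or.inr (Or.inr (Or.inl hc2e))) hv2,
          key _ (Or.inr (Or.inr (Or.inr hc3e))) hv2]
      · rw [disjoint_left]
        intro v hv1 hv2
        simp only [hF2, mem_insert, mem_singleton] at hv1
        rcases hv1 with rfl | rfl | rfl | rfl
        exacts [key _ (Or.inr (Or.inl ha1e)) hv2, key _ (Or.inl hycov) hv2,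
          key _ (Or.inr (Or.inr (Or.inl hd2e))) hv2,
          key _ (Or.inr (Or.inr (Or.inr hd3e))) hv2]
      · rw [disjoint_left]
        intro v hv1 hv2
        simp only [hF3, mem_insert, mem_singleton] at hv1
        rcases hv1 with rfl | rfl | rfl | rfl
        exacts [key _ (Or.inr (Or.inr (Or.inl ha2e))) hv2,
          key _ (Or.inr (Or.inr (Or.inr hb3e))) hv2,
          key _ (Or.inr (Or.inl hc1e)) hv2, key _ (Or.inl hz1cov) hv2]
      · rw [disjoint_left]
        intro v hv1 hv2
        simp only [hF4, mem_insert, mem_singleton] at hv1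
        rcases hv1 with rfl | rfl | rfl | rfl
        exacts [key _ (Or.inr (Or.inr (Or.inr ha3e))) hv2,
          key _ (Or.inr (Or.inr (Or.inl hb2e))) hv2,
          key _ (Or.inr (Or.inl hd1e)) hv2, key _ (Or.inl hz2cov) hv2]
    -- new quadruples are canonical
    have hF1S : F1 p ∈ canS Q W U := by
      have hcc : vc p.1.2 ≠ vc p.2 := fun h => nEdge he2 he3 hne23 hc2e hc3e h
      have hsubU : insert (vc p.1.2) {vc p.2} ⊆ U := by
        intro v hv
        rcases mem_insert.mp hv with rfl | hv
        · exact hc2U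
        · rw [mem_singleton.mp hv]; exact hc3U
      simp only [hF1]
      exact quad_mem_canS hQW hQU hWU hxQ hb1W hsubU
        (by rw [card_insert_of_notMem (by simp [hcc]), card_singleton])
    have hF2S : F2 p ∈ canS Q W U := by
      have hcc : vd p.1.2 ≠ vd p.2 := fun h => nEdge he2 he3 hne23 hd2e hd3e h
      have hsubU : insert (vd p.1.2) {vd p.2} ⊆ U := by
        intro v hv
        rcases mem_insert.mp hv with rfl | hv
        · exact hd2U
        · rw [mem_singleton.mp hv]; exact hd3U
      simp only [hF2]
      exact quad_mem_canS hQW hQU hWU ha1Q hyW hsubU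
        (by rw [card_insert_of_notMem (by simp [hcc]), card_singleton])
    have hF3S : F3 p ∈ canS Q W U := by
      have hcc : vc p.1.1 ≠ z1 := fun h => nCovL he1 hc1e hz1cov h
      have hsubU : insert (vc p.1.1) {z1} ⊆ U := by
        intro v hv
        rcases mem_insert.mp hv with rfl | hv
        · exact hc1U
        · rw [mem_singleton.mp hv]; exact hz1U
      simp only [hF3]
      exact quad_mem_canS hQW hQU hWU ha2Q hb3W hsubU
        (by rw [card_insert_of_notMem (by simp [hcc]), card_singleton])
    have hF4S : F4 p ∈ canS Q W U := by
      have hcc : vd p.1.1 ≠ z2 := fun h => nCovL he1 hd1e hz2cov h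
      have hsubU : insert (vd p.1.1) {z2} ⊆ U := by
        intro v hv
        rcases mem_insert.mp hv with rfl | hv
        · exact hd1U
        · rw [mem_singleton.mp hv]; exact hz2U
      simp only [hF4]
      exact quad_mem_canS hQW hQU hWU ha3Q hb2W hsubU
        (by rw [card_insert_of_notMem (by simp [hcc]), card_singleton])
    -- distinguished members of the new quadruples
    have hxF1 : x ∈ F1 p := by
      simp only [hF1]; exact mem_insert_self _ _
    have hyF2 : y ∈ F2 p := by
      simp only [hF2]; exact mem_insert_of_mem (mem_insert_self _ _)
    have hz1F3 : z1 ∈ F3 p := by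
      simp only [hF3]
      exact mem_insert_of_mem (mem_insert_of_mem (mem_insert_of_mem
        (mem_singleton_self _)))
    have hz2F4 : z2 ∈ F4 p := by
      simp only [hF4]
      exact mem_insert_of_mem (mem_insert_of_mem (mem_insert_of_mem
        (mem_singleton_self _)))
    have hFne : ∀ {A B : Finset V}, Disjoint A B → ∀ {u : V}, u ∈ A → A ≠ B := by
      intro A B hd u hu h
      exact disjoint_left.mp hd hu (h ▸ hu)
    -- the trimmed matching
    set M0 := ((M.erase p.1.1).erase p.1.2).erase p.2 with hM0
    have hM0mem : ∀ g ∈ M0, g ∈ M ∧ g ≠ p.1.1 ∧ g ≠ p.1.2 ∧ g ≠ p.2 := by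
      intro g hg
      simp only [hM0, mem_erase] at hg
      exact ⟨hg.2.2.2, hg.2.2.1, hg.2.1, hg.1⟩
    have hM0card : M0.card = t - 3 := by
      have m1 : p.2 ∈ (M.erase p.1.1).erase p.1.2 :=
        mem_erase.mpr ⟨hne32, mem_erase.mpr ⟨hne31, he3⟩⟩
      have m2 : p.1.2 ∈ M.erase p.1.1 := mem_erase.mpr ⟨hne21, he2⟩
      rw [hM0, card_erase_of_mem m1, card_erase_of_mem m2, card_erase_of_mem he1]
      omega
    have hF1M0 : F1 p ∉ M0 := by
      intro h
      obtain ⟨h1, h2, h3, h4⟩ := hM0mem _ h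
      exact disjoint_left.mp (hFdisjM _ h1 h2 h3 h4).1 hxF1 hxF1
    have hF2M0 : F2 p ∉ M0 := by
      intro h
      obtain ⟨h1, h2, h3, h4⟩ := hM0mem _ h
      exact disjoint_left.mp (hFdisjM _ h1 h2 h3 h4).2.1 hyF2 hyF2
    have hF3M0 : F3 p ∉ M0 := by
      intro h
      obtain ⟨h1, h2, h3, h4⟩ := hM0mem _ h
      exact disjoint_left.mp (hFdisjM _ h1 h2 h3 h4).2.2.1 hz1F3 hz1F3
    have hF4M0 : F4 p ∉ M0 := by
      intro h
      obtain ⟨h1, h2, h3, h4⟩ := hM0mem _ h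
      exact disjoint_left.mp (hFdisjM _ h1 h2 h3 h4).2.2.2 hz2F4 hz2F4
    have hne12F : F1 p ≠ F2 p := hFne d12 hxF1
    have hne13F : F1 p ≠ F3 p := hFne d13 hxF1
    have hne14F : F1 p ≠ F4 p := hFne d14 hxF1
    have hne23F : F2 p ≠ F3 p := hFne d23 hyF2
    have hne24F : F2 p ≠ F4 p := hFne d24 hyF2
    have hne34F : F3 p ≠ F4 p := hFne d34 hz1F3
    refine ⟨insert (F1 p) (insert (F2 p) (insert (F3 p) (insert (F4 p) M0))),
      ?_, ?_, ?_⟩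
    · intro g hg
      rcases mem_insert.mp hg with rfl | hg
      · exact mem_inter.mpr ⟨hF1S, hFH1⟩
      rcases mem_insert.mp hg with rfl | hg
      · exact mem_inter.mpr ⟨hF2S, hFH2⟩
      rcases mem_insert.mp hg with rfl | hg
      · exact mem_inter.mpr ⟨hF3S, hFH3⟩
      rcases mem_insert.mp hg with rfl | hg
      · exact mem_inter.mpr ⟨hF4S, hFH4⟩
      · exact hMsub (hM0mem _ hg).1
    · intro e he f hf hef
      simp only [mem_insert] at he hf
      obtain rfl | rfl | rfl | rfl | heM := he <;> obtain rfl | rfl | rfl | rfl | hfM := hf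
      · exact absurd rfl hef
      · exact d12
      · exact d13
      · exact d14
      · obtain ⟨h1, h2, h3, h4⟩ := hM0mem _ hfM
        exact (hFdisjM _ h1 h2 h3 h4).1
      · exact d12.symm
      · exact absurd rfl hef
      · exact d23
      · exact d24
      · obtain ⟨h1, h2, h3, h4⟩ := hM0mem _ hfM
        exact (hFdisjM _ h1 h2 h3 h4).2.1
      · exact d13.symm
      · exact d23.symm
      · exact absurd rfl hef
      · exact d34
      · obtain ⟨h1, h2, h3, h4⟩ := hM0mem _ hfM
        exact (hFdisjM _ h1 h2 h3 h4).2.2.1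
      · exact d14.symm
      · exact d24.symm
      · exact d34.symm
      · exact absurd rfl hef
      · obtain ⟨h1, h2, h3, h4⟩ := hM0mem _ hfM
        exact (hFdisjM _ h1 h2 h3 h4).2.2.2
      · obtain ⟨h1, h2, h3, h4⟩ := hM0mem _ heM
        exact ((hFdisjM _ h1 h2 h3 h4).1).symm
      · obtain ⟨h1, h2, h3, h4⟩ := hM0mem _ heM
        exact ((hFdisjM _ h1 h2 h3 h4).2.1).symm
      · obtain ⟨h1, h2, h3, h4⟩ := hM0mem _ heM
        exact ((hFdisjM _ h1 h2 h3 h4).2.2.1).symm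
      · obtain ⟨h1, h2, h3, h4⟩ := hM0mem _ heM
        exact ((hFdisjM _ h1 h2 h3 h4).2.2.2).symm
      · exact hM e (hM0mem _ heM).1 f (hM0mem _ hfM).1 hef
    · have n4 : F4 p ∉ M0 := hF4M0
      have n3 : F3 p ∉ insert (F4 p) M0 := by
        simp only [mem_insert]
        push_neg
        exact ⟨hne34F, hF3M0⟩
      have n2 : F2 p ∉ insert (F3 p) (insert (F4 p) M0) := by
        simp only [mem_insert]
        push_neg
        exact ⟨hne23F, hne24F, hF2M0⟩
      have n1 : F1 p ∉ insert (F2 p) (insert (F3 p) (insert (F4 p) M0)) := by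
        simp only [mem_insert]
        push_neg
        exact ⟨hne12F, hne13F, hne14F, hF1M0⟩
      rw [card_insert_of_notMem n1, card_insert_of_notMem n2,
        card_insert_of_notMem n3, card_insert_of_notMem n4, hM0card]
      omega

end Extend

lemma exists_pm_aux {V : Type*} [Fintype V] [DecidableEq V] [LinearOrder V]
    (Q W U : Finset V) (m : ℕ) (hm : 0 < m)
    (hQW : Disjoint Q W) (hQU : Disjoint Q U) (hWU : Disjoint W U)
    (hcovu : Q ∪ W ∪ U = univ)
    (hQ : Q.card = m) (hW : W.card = m) (hU : U.card = 2 * m)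
    (H' : Finset (Finset V))
    (hbad : ∀ v : V,
      4096 * ((canS Q W U \ H').filter (fun e => v ∈ e)).card < 27 * m ^ 3) :
    ∃ M, M ⊆ H' ∧ (∀ e ∈ M, ∀ f ∈ M, e ≠ f → Disjoint e f) ∧
      ∀ x : V, ∃ e ∈ M, x ∈ e := by
  classical
  have key : ∀ k, k ≤ m → ∃ M, M ⊆ canS Q W U ∩ H' ∧
      (∀ e ∈ M, ∀ f ∈ M, e ≠ f → Disjoint e f) ∧ M.card = k := by
    intro k
    induction k with
    | zero => exact fun _ => ⟨∅, empty_subset _, by simp, rfl⟩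
    | succ k ih =>
      intro hk
      obtain ⟨M, h1, h2, h3⟩ := ih (by omega)
      obtain ⟨M', h1', h2', h3'⟩ := extend_matching Q W U m hQW hQU hWU hQ hW hU H'
        hbad M h1 h2 (by omega)
      exact ⟨M', h1', h2', by omega⟩
  obtain ⟨M, h1, h2, h3⟩ := key m le_rfl
  refine ⟨M, fun e he => (mem_inter.mp (h1 he)).2, h2, ?_⟩
  have hcard4 : ∀ e ∈ M, e.card = 4 := by
    intro e he
    have heS := (mem_inter.mp (h1 he)).1
    have hsh : (e ∩ Q).card = 1 ∧ (e ∩ W).card = 1 ∧ (e ∩ U).card = 2 := by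
      simpa [canS, mem_filter] using heS
    have hdecomp : e = (e ∩ Q) ∪ ((e ∩ W) ∪ (e ∩ U)) := by
      rw [← inter_union_distrib_left, ← inter_union_distrib_left, ← union_assoc,
        hcovu, inter_univ]
    have hdQ : Disjoint (e ∩ Q) ((e ∩ W) ∪ (e ∩ U)) := by
      rw [disjoint_union_right]
      exact ⟨hQW.mono inter_subset_right inter_subset_right,
        hQU.mono inter_subset_right inter_subset_right⟩
    have hdW : Disjoint (e ∩ W) (e ∩ U) :=
      hWU.mono inter_subset_right inter_subset_right
    rw [hdecomp, card_union_of_disjoint hdQ, card_union_of_disjoint hdW, hsh.1,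
      hsh.2.1, hsh.2.2]
  have hcovcard : (M.biUnion id).card = 4 * m := by
    have hid : M.biUnion id = M.biUnion (fun e => e) := rfl
    rw [hid, card_biUnion (fun e he f hf hef => h2 e he f hf hef)]
    rw [Finset.sum_congr rfl (fun e he => hcard4 e he), Finset.sum_const, h3,
      smul_eq_mul, mul_comm]
  have hVcard : Fintype.card V = 4 * m := by
    rw [← card_univ, ← hcovu, card_union_of_disjoint, card_union_of_disjoint hQW]
    · omega
    · rw [disjoint_union_left]; exact ⟨hQU, hWU⟩
  have huniv : M.biUnion id = univ := eq_univ_of_card _ (by rw [hcovcard, hVcard])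
  intro x
  have : x ∈ M.biUnion id := huniv ▸ mem_univ x
  obtain ⟨e, he, hx⟩ := mem_biUnion.mp this
  exact ⟨e, he, hx⟩

lemma canS_subset_ext {V : Type*} [Fintype V] [DecidableEq V]
    (Q P U W : Finset V) (hUW : Disjoint U W) (hUWu : U ∪ W = P) :
    ∀ e ∈ canS Q W U, e ∈ extremalH13 Q P W := by
  intro e he
  have h : (e ∩ Q).card = 1 ∧ (e ∩ W).card = 1 ∧ (e ∩ U).card = 2 := by
    simpa [canS, mem_filter] using he
  obtain ⟨h1, h2, h3⟩ := h
  have hWP : W ⊆ P := hUWu ▸ subset_union_right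
  have hUP : U ⊆ P := hUWu ▸ subset_union_left
  have hPdecomp : e ∩ P = (e ∩ U) ∪ (e ∩ W) := by
    rw [← inter_union_distrib_left, hUWu]
  refine mem_filter.mpr ⟨mem_univ _, h1, ?_, ?_, ?_⟩
  · rw [hPdecomp, card_union_of_disjoint
      (hUW.mono inter_subset_right inter_subset_right), h2, h3]
  · have hI : e ∩ P ∩ W = e ∩ W := by
      rw [inter_assoc, inter_eq_right.mpr hWP]
    rw [hI]
    exact card_pos.mp (by omega)
  · intro hsub
    obtain ⟨u, hu⟩ : (e ∩ U).Nonempty := card_pos.mp (by omega)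
    have huP : u ∈ e ∩ P :=
      mem_inter.mpr ⟨(mem_inter.mp hu).1, hUP (mem_inter.mp hu).2⟩
    exact disjoint_left.mp hUW (mem_inter.mp hu).2 (hsub huP)

/-- Let `n ∈ 3ℤ` be positive, `H` a balanced (1,3)-partite 4-graph on
`4n/3` vertices with partition classes `Q, P` (`|Q| = n/3`, `|P| = n`), and
`0 < α < 2^{-12}`. If there is an `H_{1,3}(n, n/3)` on the same vertex set (same class
`Q`, with `P` split into `U, W`, `|U| = 2n/3`, `|W| = n/3`) such that every vertex of
`H` is `α`-good with respect to it, then `H` has a perfect matching. -/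
theorem pm_when_all_vertices_good (n : ℕ) (hn3 : 3 ∣ n) (hn : 0 < n)
    (Q P U W : Finset (Fin (n + n / 3)))
    (hQP : Disjoint Q P) (hQPu : Q ∪ P = Finset.univ)
    (hQ : Q.card = n / 3) (hP : P.card = n)
    (hUW : Disjoint U W) (hUWu : U ∪ W = P)
    (hU : U.card = 2 * n / 3) (hW : W.card = n / 3)
    (H : Finset (Finset (Fin (n + n / 3))))
    (hpart : ∀ e ∈ H, (e ∩ Q).card = 1 ∧ (e ∩ P).card = 3)
    (α : ℝ) (hα0 : 0 < α) (hα1 : α < 2 ^ (-12 : ℤ))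
    (hgood : ∀ v : Fin (n + n / 3),
      (((link (extremalH13 Q P W) v) \ (link H v)).card : ℝ) ≤ α * (n : ℝ) ^ 3) :
    ∃ M ⊆ H, (∀ e ∈ M, ∀ f ∈ M, e ≠ f → Disjoint e f) ∧
      ∀ x : Fin (n + n / 3), ∃ e ∈ M, x ∈ e := by
  classical
  obtain ⟨m, rfl⟩ := hn3
  have hm : 0 < m := by omega
  have hWU' : Disjoint W U := hUW.symm
  have hQWd : Disjoint Q W := hQP.mono_right (by rw [← hUWu]; exact subset_union_right)
  have hQUd : Disjoint Q U := hQP.mono_right (by rw [← hUWu]; exact subset_union_left)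
  have hcovu : Q ∪ W ∪ U = univ := by
    rw [union_assoc, union_comm W U, hUWu, hQPu]
  have hQc : Q.card = m := by rw [hQ]; omega
  have hWc : W.card = m := by rw [hW]; omega
  have hUc : U.card = 2 * m := by rw [hU]; omega
  have hbad : ∀ v : Fin (3 * m + 3 * m / 3),
      4096 * ((canS Q W U \ H).filter (fun e => v ∈ e)).card < 27 * m ^ 3 := by
    intro v
    have hinj : ((canS Q W U \ H).filter (fun e => v ∈ e)).card ≤
        ((link (extremalH13 Q P W) v) \ (link H v)).card := by
      apply card_le_card_of_injOn (fun e => e.erase v) ?_ ?_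
      · intro e he
        obtain ⟨heSH, hev⟩ := mem_filter.mp he
        obtain ⟨heS, heH⟩ := mem_sdiff.mp heSH
        refine mem_sdiff.mpr ⟨?_, ?_⟩
        · exact mem_image.mpr ⟨e, mem_filter.mpr
            ⟨canS_subset_ext Q P U W hUW hUWu e heS, hev⟩, rfl⟩
        · intro hmem
          obtain ⟨f, hf, hfe⟩ := mem_image.mp hmem
          obtain ⟨hfH, hfv⟩ := mem_filter.mp hf
          have hfeq : f = e := by
            have h1 := insert_erase hfv
            have h2 := insert_erase hev
            rw [← h1, ← h2, hfe]
          exact heH (hfeq ▸ hfH)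
      · intro e he f hf h
        have hev : v ∈ e := (mem_filter.mp (mem_coe.mp he)).2
        have hfv : v ∈ f := (mem_filter.mp (mem_coe.mp hf)).2
        have h' : e.erase v = f.erase v := h
        rw [← insert_erase hev, ← insert_erase hfv, h']
    have h1 := hgood v
    set c : ℕ := ((canS Q W U \ H).filter (fun e => v ∈ e)).card with hc
    have h3 : (c : ℝ) ≤ α * ((3 * m : ℕ) : ℝ) ^ 3 := by
      refine le_trans ?_ h1
      exact_mod_cast hinj
    have hnpos : (0 : ℝ) < ((3 * m : ℕ) : ℝ) ^ 3 := by
      have : (0 : ℝ) < ((3 * m : ℕ) : ℝ) := by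
        exact_mod_cast Nat.pos_of_ne_zero (by omega)
      positivity
    have h2 : α * ((3 * m : ℕ) : ℝ) ^ 3 < (2 : ℝ) ^ (-12 : ℤ) * ((3 * m : ℕ) : ℝ) ^ 3 :=
      mul_lt_mul_of_pos_right hα1 hnpos
    have h4 : (4096 : ℝ) * (c : ℝ) < 27 * (m : ℝ) ^ 3 := by
      have e1 : (2 : ℝ) ^ (-12 : ℤ) = 1 / 4096 := by norm_num
      have e2 : ((3 * m : ℕ) : ℝ) ^ 3 = 27 * (m : ℝ) ^ 3 := by
        push_cast
        ring
      rw [e1, e2] at h2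
      rw [e2] at h3
      linarith
    exact_mod_cast h4
  obtain ⟨M, hMH, hmatch, hcover⟩ := exists_pm_aux Q W U m hm hQWd hQUd hWU' hcovu
    hQc hWc hUc H hbad
  exact ⟨M, hMH, hmatch, hcover⟩
end

section
/- There exists ε_0 > 0 such that for all ε, ρ with 0 < ε ≤ ε_0 and 0 < ρ ≤ ε/4 there exists N such that for every n ∈ 3ℤ with n ≥ N the following holds: let H be a (1,3)-partite 4-graph with partition classes Q, P, 3|Q| = |P| = n, such that d_H({u, v}) ≥ C(n−1, 2) − C(2n/3, 2) − ρn² for all v ∈ Q and u ∈ P. If H is not ε-close to any H_{1,3}(n, n/3) on V(H) (with larger class P and smaller class Q), then for every A ⊆ V(H) with |A ∩ Q| ≥ (1/3 − ε/8)n and |A ∩ P| ≥ (2/3 − ε/8)n, the induced subhypergraph H[A] has at least (ε/6)·e(H) edges. -/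
open Finset

variable {V : Type*}

theorem eq_singleton_of_card_eq_one {s : Finset V} {a : V} (h : #s = 1) (ha : a ∈ s) :
    s = {a} :=
  (eq_of_subset_of_card_le (singleton_subset_iff.2 ha) (by rw [h, card_singleton])).symm

variable [DecidableEq V]

theorem cast_card_sdiff_le {S A : Finset V} {x : ℝ} (h : (#S : ℝ) - x ≤ #(A ∩ S)) :
    (#(S \ A) : ℝ) ≤ x := by
  have : ((#(S \ A) + #(A ∩ S) : ℕ) : ℝ) = #S := by
    rw [inter_comm, card_sdiff_add_card_inter]
  push_cast at this
  linarith

theorem exists_subset_card_eq_card_sdiff_le {P : Finset V} (A : Finset V) {k : ℕ} (hk : k ≤ #P)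
    {x : ℝ} (hx : 0 ≤ x) (hA : (k : ℝ) - x ≤ #(A ∩ P)) :
    ∃ U ⊆ P, #U = k ∧ (#(U \ A) : ℝ) ≤ x := by
  rcases le_total k #(A ∩ P) with h | h
  · obtain ⟨U, hU, rfl⟩ := exists_subset_card_eq h
    refine ⟨U, hU.trans inter_subset_right, rfl, ?_⟩
    rwa [sdiff_eq_empty_iff_subset.2 (hU.trans inter_subset_left), card_empty, Nat.cast_zero]
  · obtain ⟨U, hAU, hUP, rfl⟩ := exists_subsuperset_card_eq inter_subset_right h hk
    refine ⟨U, hUP, rfl, cast_card_sdiff_le (hA.trans ?_)⟩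
    exact_mod_cast card_le_card (subset_inter inter_subset_left hAU)

theorem cast_mul_choose_two (k : ℕ) :
    (k : ℝ) * k.choose 2 = k * ((k - 1).choose 2 + (k - 1 : ℝ)) := by
  cases k with
  | zero => simp
  | succ k =>
    rw [Nat.choose_succ_succ', Nat.choose_one_right, Nat.add_sub_cancel]
    push_cast
    ring

def IsOneThreePartite (Q P : Finset V) (H : Finset (Finset V)) : Prop :=
  ∀ e ∈ H, #(e ∩ Q) = 1 ∧ #(e ∩ P) = 3

theorem IsOneThreePartite.mono {Q P : Finset V} {G H : Finset (Finset V)}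
    (hH : IsOneThreePartite Q P H) (hGH : G ⊆ H) : IsOneThreePartite Q P G :=
  fun e he => hH e (hGH he)

def codegree (F : Finset (Finset V)) (x y : V) : ℕ :=
  #{e ∈ F | x ∈ e ∧ y ∈ e}

theorem sum_sum_codegree (F : Finset (Finset V)) (S T : Finset V) :
    ∑ x ∈ S, ∑ y ∈ T, codegree F x y = ∑ e ∈ F, #(e ∩ S) * #(e ∩ T) := by
  have hcard (e X : Finset V) : #(e ∩ X) = ∑ x ∈ X, if x ∈ e then 1 else 0 := by
    rw [← card_filter, filter_mem_eq_inter, inter_comm]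
  simp_rw [hcard, sum_mul_sum, ite_zero_mul_ite_zero, mul_one, codegree, card_filter]
  exact (sum_congr rfl fun _ _ => sum_comm).trans sum_comm

/-- The link of `{u, v}` (`u ∈ P`, `v ∈ Q`) in a (1,3)-partite `F`, as pairs in `P \ {u}`. -/
def pairLink (P : Finset V) (F : Finset (Finset V)) (u v : V) : Finset (Finset V) :=
  {e ∈ F | u ∈ e ∧ v ∈ e}.image fun e => (e ∩ P).erase u

theorem pairLink_inter_powersetCard_subset {P U : Finset V} {F : Finset (Finset V)} {u v : V}
    (hu : u ∈ U) :
    pairLink P F u v ∩ (U.erase u).powersetCard 2 ⊆ pairLink P {e ∈ F | e ∩ P ⊆ U} u v := by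
  intro s hs
  obtain ⟨hsF, hsU⟩ := mem_inter.1 hs
  obtain ⟨e, he, rfl⟩ := mem_image.1 hsF
  obtain ⟨heF, hue, hve⟩ := mem_filter.1 he
  refine mem_image_of_mem _ (mem_filter.2 ⟨mem_filter.2 ⟨heF, fun x hx => ?_⟩, hue, hve⟩)
  by_cases hxu : x = u
  · exact hxu ▸ hu
  · exact mem_of_mem_erase ((mem_powersetCard.1 hsU).1 (mem_erase.2 ⟨hxu, hx⟩))

theorem IsOneThreePartite.pairLink_subset {Q P : Finset V} {F : Finset (Finset V)}
    (hF : IsOneThreePartite Q P F) {u : V} (hu : u ∈ P) (v : V) :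
    pairLink P F u v ⊆ (P.erase u).powersetCard 2 := by
  refine image_subset_iff.2 fun e he => mem_powersetCard.2
    ⟨erase_subset_erase u inter_subset_right, ?_⟩
  obtain ⟨heF, hue, -⟩ := mem_filter.1 he
  rw [card_erase_of_mem (mem_inter.2 ⟨hue, hu⟩), (hF e heF).2]

theorem IsOneThreePartite.filter_subset_setOf {Q P : Finset V} {H : Finset (Finset V)}
    (hH : IsOneThreePartite Q P H) (u v : V) :
    (({e ∈ H | u ∈ e ∧ v ∈ e} : Finset (Finset V)) : Set (Finset V)) ⊆
      {e | #(e ∩ Q) = 1 ∧ u ∈ e ∧ v ∈ e} :=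
  fun e he => ⟨(hH e (mem_filter.1 he).1).1, (mem_filter.1 he).2⟩

section Partition

variable [Fintype V] {Q P : Finset V}

theorem eq_of_inter_eq_of_inter_eq (hQP : Q ∪ P = univ) {e f : Finset V}
    (hQ : e ∩ Q = f ∩ Q) (hP : e ∩ P = f ∩ P) : e = f := by
  rw [← inter_univ e, ← inter_univ f, ← hQP, inter_union_distrib_left,
    inter_union_distrib_left, hQ, hP]

theorem injOn_erase_inter (hQP : Q ∪ P = univ) {u v : V} (hu : u ∈ P) (hv : v ∈ Q) :
    Set.InjOn (fun e => (e ∩ P).erase u) {e | #(e ∩ Q) = 1 ∧ u ∈ e ∧ v ∈ e} := by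
  rintro e ⟨he, hue, hve⟩ f ⟨hf, huf, hvf⟩ hef
  refine eq_of_inter_eq_of_inter_eq hQP ?_ ?_
  · rw [eq_singleton_of_card_eq_one he (mem_inter.2 ⟨hve, hv⟩),
      eq_singleton_of_card_eq_one hf (mem_inter.2 ⟨hvf, hv⟩)]
  · exact erase_injOn' u (mem_inter.2 ⟨hue, hu⟩) (mem_inter.2 ⟨huf, hu⟩) hef

namespace IsOneThreePartite

variable {H : Finset (Finset V)}

theorem card_le (hQP : Q ∪ P = univ) (hH : IsOneThreePartite Q P H) :
    #H ≤ #Q * (#P).choose 3 := by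
  rw [← card_powersetCard 3, ← Nat.choose_one_right #Q, ← card_powersetCard, ← card_product]
  refine card_le_card_of_injOn (fun e => (e ∩ Q, e ∩ P)) (fun e he => ?_)
    fun e _ f _ hef => eq_of_inter_eq_of_inter_eq hQP (Prod.ext_iff.1 hef).1 (Prod.ext_iff.1 hef).2
  exact mem_product.2 ⟨mem_powersetCard.2 ⟨inter_subset_right, (hH e he).1⟩,
    mem_powersetCard.2 ⟨inter_subset_right, (hH e he).2⟩⟩

theorem card_filter_mem_le_of_mem_left (hQP : Q ∪ P = univ) (hH : IsOneThreePartite Q P H)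
    {v : V} (hv : v ∈ Q) : #{e ∈ H | v ∈ e} ≤ (#P).choose 3 := by
  rw [← card_powersetCard]
  refine card_le_card_of_injOn (· ∩ P) (fun e he => ?_) fun e he f hf hef => ?_
  · exact mem_powersetCard.2 ⟨inter_subset_right, (hH e (mem_filter.1 he).1).2⟩
  · obtain ⟨heH, hve⟩ := mem_filter.1 he
    obtain ⟨hfH, hvf⟩ := mem_filter.1 hf
    refine eq_of_inter_eq_of_inter_eq hQP ?_ hef
    rw [eq_singleton_of_card_eq_one (hH e heH).1 (mem_inter.2 ⟨hve, hv⟩),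
      eq_singleton_of_card_eq_one (hH f hfH).1 (mem_inter.2 ⟨hvf, hv⟩)]

theorem card_filter_mem_le_of_mem_right (hQP : Q ∪ P = univ) (hH : IsOneThreePartite Q P H)
    {u : V} (hu : u ∈ P) : #{e ∈ H | u ∈ e} ≤ #Q * (#P - 1).choose 2 := by
  rw [← card_erase_of_mem hu, ← card_powersetCard 2, ← Nat.choose_one_right #Q,
    ← card_powersetCard, ← card_product]
  refine card_le_card_of_injOn (fun e => (e ∩ Q, (e ∩ P).erase u)) (fun e he => ?_)
    fun e he f hf hef => ?_
  · obtain ⟨heH, hue⟩ := mem_filter.1 he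
    refine mem_product.2 ⟨mem_powersetCard.2 ⟨inter_subset_right, (hH e heH).1⟩,
      mem_powersetCard.2 ⟨erase_subset_erase u inter_subset_right, ?_⟩⟩
    rw [card_erase_of_mem (mem_inter.2 ⟨hue, hu⟩), (hH e heH).2]
  · exact eq_of_inter_eq_of_inter_eq hQP (Prod.ext_iff.1 hef).1
      (erase_injOn' u (mem_inter.2 ⟨(mem_filter.1 he).2, hu⟩)
        (mem_inter.2 ⟨(mem_filter.1 hf).2, hu⟩) (Prod.ext_iff.1 hef).2)

theorem card_pairLink (hQP : Q ∪ P = univ) (hH : IsOneThreePartite Q P H) {u v : V}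
    (hu : u ∈ P) (hv : v ∈ Q) : #(pairLink P H u v) = codegree H u v :=
  card_image_of_injOn ((injOn_erase_inter hQP hu hv).mono (hH.filter_subset_setOf u v))

theorem disjoint_pairLink (hQP : Q ∪ P = univ) (hH : IsOneThreePartite Q P H)
    {F : Finset (Finset V)} (hF : IsOneThreePartite Q P F) (hFH : Disjoint F H) {u v : V}
    (hu : u ∈ P) (hv : v ∈ Q) : Disjoint (pairLink P F u v) (pairLink P H u v) := by
  refine disjoint_left.2 fun s hsF hsH => ?_
  obtain ⟨e, he, rfl⟩ := mem_image.1 hsF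
  obtain ⟨f, hf, hfe⟩ := mem_image.1 hsH
  have hef := injOn_erase_inter hQP hu hv (hH.filter_subset_setOf u v hf)
    (hF.filter_subset_setOf u v he) hfe
  exact disjoint_left.1 hFH (mem_filter.1 he).1 (hef ▸ (mem_filter.1 hf).1)

theorem codegree_add_codegree_add_choose_le (hQP : Q ∪ P = univ) (hH : IsOneThreePartite Q P H)
    {F : Finset (Finset V)} (hF : IsOneThreePartite Q P F) (hFH : Disjoint F H)
    {U : Finset V} (hUP : U ⊆ P) (hFU : ∀ e ∈ F, ¬ e ∩ P ⊆ U) {u v : V} (hu : u ∈ U)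
    (hv : v ∈ Q) :
    codegree F u v + codegree H u v + (#U - 1).choose 2 ≤
      (#P - 1).choose 2 + codegree {e ∈ H | e ∩ P ⊆ U} u v := by
  have huP := hUP hu
  have hFU' : Disjoint (pairLink P F u v) ((U.erase u).powersetCard 2) := by
    rw [disjoint_iff_inter_eq_empty, ← subset_empty]
    refine (pairLink_inter_powersetCard_subset hu).trans ?_
    rw [filter_false_of_mem hFU, pairLink, filter_empty, image_empty]
  have hcover := card_le_card (union_subset (hF.pairLink_subset huP v)
    (union_subset (hH.pairLink_subset huP v) (powersetCard_mono (erase_subset_erase u hUP))))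
  have hFH' := hH.disjoint_pairLink hQP hF hFH huP hv
  rw [card_union_of_disjoint (disjoint_union_right.2 ⟨hFH', hFU'⟩), card_powersetCard,
    card_erase_of_mem huP, hF.card_pairLink hQP huP hv] at hcover
  have hinter := (card_le_card (pairLink_inter_powersetCard_subset (F := H) (v := v) hu)).trans_eq
    ((hH.mono (filter_subset _ H)).card_pairLink hQP huP hv)
  have hunion := card_union_add_card_inter (pairLink P H u v) ((U.erase u).powersetCard 2)
  rw [hH.card_pairLink hQP huP hv, card_powersetCard, card_erase_of_mem hu] at hunion
  omega

theorem card_add_sum_codegree_le (hQP : Q ∪ P = univ) (hH : IsOneThreePartite Q P H)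
    {F : Finset (Finset V)} (hF : IsOneThreePartite Q P F) (hFH : Disjoint F H)
    {U : Finset V} (hUP : U ⊆ P) (hFU : ∀ e ∈ F, ¬ e ∩ P ⊆ U)
    (hFU' : ∀ e ∈ F, (e ∩ U).Nonempty) :
    #F + ∑ u ∈ U, ∑ v ∈ Q, codegree H u v + #U * #Q * (#U - 1).choose 2 ≤
      #U * #Q * (#P - 1).choose 2 + 3 * #{e ∈ H | e ∩ P ⊆ U} := by
  have hF_le : #F ≤ ∑ u ∈ U, ∑ v ∈ Q, codegree F u v := by
    rw [sum_sum_codegree, card_eq_sum_ones]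
    refine sum_le_sum fun e he => ?_
    rw [(hF e he).1, mul_one]
    exact (hFU' e he).card_pos
  have hX_le : ∑ u ∈ U, ∑ v ∈ Q, codegree {e ∈ H | e ∩ P ⊆ U} u v ≤
      3 * #{e ∈ H | e ∩ P ⊆ U} := by
    rw [sum_sum_codegree, mul_comm, card_eq_sum_ones, sum_mul]
    refine sum_le_sum fun e he => ?_
    obtain ⟨heQ, heP⟩ := hH e (mem_filter.1 he).1
    rw [heQ, mul_one, one_mul, ← heP]
    exact card_le_card (inter_subset_inter_left hUP)
  have hpair := sum_le_sum fun u hu => sum_le_sum fun v hv =>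
    hH.codegree_add_codegree_add_choose_le hQP hF hFH hUP hFU hu hv
  simp only [sum_add_distrib, sum_const, smul_eq_mul, ← mul_assoc] at hpair
  omega

theorem card_filter_inter_subset_le (hQP : Q ∪ P = univ) (hH : IsOneThreePartite Q P H)
    {U : Finset V} (hUP : U ⊆ P) (A : Finset V) :
    #{e ∈ H | e ∩ P ⊆ U} ≤ #{e ∈ H | e ⊆ A} + #(Q \ A) * (#P).choose 3 +
      #(U \ A) * (#Q * (#P - 1).choose 2) := by
  have hcover : {e ∈ H | e ∩ P ⊆ U} ⊆ {e ∈ H | e ⊆ A} ∪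
      (Q \ A).biUnion (fun v => {e ∈ H | v ∈ e}) ∪
        (U \ A).biUnion (fun u => {e ∈ H | u ∈ e}) := by
    intro e he
    obtain ⟨heH, heU⟩ := mem_filter.1 he
    by_cases hA : e ⊆ A
    · exact mem_union_left _ (mem_union_left _ (mem_filter.2 ⟨heH, hA⟩))
    obtain ⟨x, hxe, hxA⟩ := not_subset.1 hA
    rcases mem_union.1 (hQP ▸ mem_univ x) with hxQ | hxP
    · exact mem_union_left _ (mem_union_right _
        (mem_biUnion.2 ⟨x, mem_sdiff.2 ⟨hxQ, hxA⟩, mem_filter.2 ⟨heH, hxe⟩⟩))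
    · exact mem_union_right _ (mem_biUnion.2
        ⟨x, mem_sdiff.2 ⟨heU (mem_inter.2 ⟨hxe, hxP⟩), hxA⟩, mem_filter.2 ⟨heH, hxe⟩⟩)
  refine (card_le_card hcover).trans ((card_union_le _ _).trans
    (add_le_add ((card_union_le _ _).trans (add_le_add le_rfl ?_)) ?_))
  · simpa using card_biUnion_le.trans (sum_le_card_nsmul _ _ _ fun v hv =>
      hH.card_filter_mem_le_of_mem_left hQP (sdiff_subset hv))
  · simpa using card_biUnion_le.trans (sum_le_card_nsmul _ _ _ fun u hu =>
      hH.card_filter_mem_le_of_mem_right hQP (hUP (sdiff_subset hu)))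

end IsOneThreePartite

theorem isOneThreePartite_extremalH13 (W : Finset V) :
    IsOneThreePartite Q P (extremalH13 Q P W) := fun _ he =>
  ⟨(mem_filter.1 he).2.1, (mem_filter.1 he).2.2.1⟩

theorem not_inter_subset_of_mem_extremalH13 {U e : Finset V}
    (he : e ∈ extremalH13 Q P (P \ U)) : ¬ e ∩ P ⊆ U := fun h => by
  obtain ⟨w, hw⟩ := (mem_filter.1 he).2.2.2.1
  rw [mem_inter, mem_sdiff] at hw
  exact hw.2.2 (h hw.1)

theorem inter_nonempty_of_mem_extremalH13 {U e : Finset V}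
    (he : e ∈ extremalH13 Q P (P \ U)) : (e ∩ U).Nonempty := by
  obtain ⟨x, hxe, hx⟩ := not_subset.1 (mem_filter.1 he).2.2.2.2
  rw [mem_inter] at hxe
  exact ⟨x, mem_inter.2 ⟨hxe.1, by simpa [hxe.2] using hx⟩⟩

theorem card_extremalH13_sdiff_le (hQP : Q ∪ P = univ) {H : Finset (Finset V)}
    (hH : IsOneThreePartite Q P H) {U : Finset V} (hUP : U ⊆ P) {δ : ℝ}
    (hdeg : ∀ u ∈ U, ∀ v ∈ Q,
      ((#P - 1).choose 2 : ℝ) - (#U).choose 2 - δ ≤ codegree H u v) :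
    (#(extremalH13 Q P (P \ U) \ H) : ℝ) ≤
      #U * #Q * (#U - 1 + δ) + 3 * #{e ∈ H | e ∩ P ⊆ U} := by
  have hcount := hH.card_add_sum_codegree_le hQP
    ((isOneThreePartite_extremalH13 _).mono sdiff_subset) sdiff_disjoint hUP
    (fun e he => not_inter_subset_of_mem_extremalH13 (mem_sdiff.1 he).1)
    (fun e he => inter_nonempty_of_mem_extremalH13 (mem_sdiff.1 he).1)
  have hsum : (#U * #Q : ℝ) * ((#P - 1).choose 2 - (#U).choose 2 - δ) ≤
      ∑ u ∈ U, ∑ v ∈ Q, (codegree H u v : ℝ) := by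
    calc _ = ∑ u ∈ U, ∑ v ∈ Q, (((#P - 1).choose 2 : ℝ) - (#U).choose 2 - δ) := by
          simp only [sum_const, nsmul_eq_mul]; ring
      _ ≤ _ := sum_le_sum fun u hu => sum_le_sum fun v hv => hdeg u hu v hv
  have hcountR := (Nat.cast_le (α := ℝ)).2 hcount
  push_cast at hcountR
  linear_combination hcountR + hsum + (#Q : ℝ) * cast_mul_choose_two (#U)

theorem IsOneThreePartite.le_card_filter_subset (hQP : Q ∪ P = univ) {H : Finset (Finset V)}
    (hH : IsOneThreePartite Q P H) {U : Finset V} (hUP : U ⊆ P) (A : Finset V) {ε ρ : ℝ}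
    (hε : 0 < ε) (hρε : ρ ≤ ε / 4) (hQ : 3 * #Q = #P) (hU : 3 * #U = 2 * #P)
    (hεP : 1 ≤ ε * #P)
    (hdeg : ∀ u ∈ U, ∀ v ∈ Q,
      ((#P - 1).choose 2 : ℝ) - (#U).choose 2 - ρ * #P ^ 2 ≤ codegree H u v)
    (hfar : ε * ((#P + #Q : ℕ) : ℝ) ^ 4 ≤ #(extremalH13 Q P (P \ U) \ H))
    (hQA : (#(Q \ A) : ℝ) ≤ ε * #P / 8) (hUA : (#(U \ A) : ℝ) ≤ ε * #P / 8) :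
    ε / 6 * #H ≤ #{e ∈ H | e ⊆ A} := by
  have hfew := card_extremalH13_sdiff_le hQP hH hUP hdeg
  have hX := (Nat.cast_le (α := ℝ)).2 (hH.card_filter_inter_subset_le hQP hUP A)
  have hHcard := (Nat.cast_le (α := ℝ)).2 (hH.card_le hQP)
  have hc3 : ((#P).choose 3 : ℝ) ≤ #P ^ 3 := by exact_mod_cast Nat.choose_le_pow _ _
  have hc2 : ((#P - 1).choose 2 : ℝ) ≤ #P ^ 2 := by
    exact_mod_cast (Nat.choose_le_pow _ _).trans (Nat.pow_le_pow_left (Nat.sub_le _ _) _)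
  have hQR : (#Q : ℝ) = #P / 3 := by rw [eq_div_iff three_ne_zero, mul_comm]; exact_mod_cast hQ
  have hUR : (#U : ℝ) = 2 * #P / 3 := by
    rw [eq_div_iff three_ne_zero, mul_comm]; exact_mod_cast hU
  push_cast at hfar hX hHcard
  rw [hQR, hUR] at hfew
  rw [hQR] at hfar hX hHcard
  -- with `p = #P` these give `(256/81) ε p⁴ < (4/27) p³ + (13/18) ε p⁴`, and `p³ ≤ ε p⁴`
  by_contra! hcon
  have hP0 : (0 : ℝ) < #P := by nlinarith
  nlinarith [mul_le_mul hQA hc3 (Nat.cast_nonneg _) (by positivity),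
    mul_le_mul hUA (mul_le_mul_of_nonneg_left hc2 (by positivity : (0 : ℝ) ≤ #P / 3))
      (by positivity) (by positivity),
    mul_le_mul_of_nonneg_left hHcard (by positivity : (0 : ℝ) ≤ ε / 6),
    mul_le_mul_of_nonneg_left hc3 (by positivity : (0 : ℝ) ≤ #P / 3),
    mul_le_mul_of_nonneg_right hρε (by positivity : (0 : ℝ) ≤ #P ^ 4),
    mul_le_mul_of_nonneg_right hεP (by positivity : (0 : ℝ) ≤ #P ^ 3),
    mul_pos hε (pow_pos hP0 4)]

end Partition

/-- There exists `ε₀ > 0` such that for all `0 < ε ≤ ε₀` and `0 < ρ ≤ ε/4`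
there exists `N` such that for every `n ∈ 3ℤ` with `n ≥ N`: let `H` be a (1,3)-partite
4-graph with classes `Q, P`, `3|Q| = |P| = n`, with
`d_H({u,v}) ≥ C(n-1,2) - C(2n/3,2) - ρn²` for all `v ∈ Q`, `u ∈ P`. If `H` is not
`ε`-close to any `H_{1,3}(n, n/3)` on `V(H)` (larger class `P`, smaller class `Q`), then
every `A ⊆ V(H)` with `|A ∩ Q| ≥ (1/3 - ε/8)n` and `|A ∩ P| ≥ (2/3 - ε/8)n` satisfies
`e(H[A]) ≥ (ε/6)·e(H)`. -/
theorem dense_on_large_sets :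
    ∃ ε₀ : ℝ, 0 < ε₀ ∧ ∀ ε ρ : ℝ, 0 < ε → ε ≤ ε₀ → 0 < ρ → ρ ≤ ε / 4 →
      ∃ N : ℕ, ∀ n : ℕ, 3 ∣ n → N ≤ n →
        ∀ (Q P : Finset (Fin (n + n / 3))) (H : Finset (Finset (Fin (n + n / 3)))),
          Disjoint Q P → Q ∪ P = Finset.univ →
          Q.card = n / 3 → P.card = n →
          (∀ e ∈ H, (e ∩ Q).card = 1 ∧ (e ∩ P).card = 3) →
          (∀ v ∈ Q, ∀ u ∈ P,
            (Nat.choose (n - 1) 2 : ℝ) - (Nat.choose (2 * n / 3) 2 : ℝ) - ρ * (n : ℝ) ^ 2 ≤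
              ((H.filter (fun e => u ∈ e ∧ v ∈ e)).card : ℝ)) →
          (∀ U W : Finset (Fin (n + n / 3)), Disjoint U W → U ∪ W = P →
            U.card = 2 * n / 3 → W.card = n / 3 →
            ε * ((n + n / 3 : ℕ) : ℝ) ^ 4 ≤ (((extremalH13 Q P W) \ H).card : ℝ)) →
          ∀ A : Finset (Fin (n + n / 3)),
            ((1 : ℝ) / 3 - ε / 8) * (n : ℝ) ≤ ((A ∩ Q).card : ℝ) →
            ((2 : ℝ) / 3 - ε / 8) * (n : ℝ) ≤ ((A ∩ P).card : ℝ) →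
            ε / 6 * (H.card : ℝ) ≤ ((H.filter (fun e => e ⊆ A)).card : ℝ) := by
  refine ⟨1, one_pos, fun ε ρ hε _ _ hρε => ⟨⌈1 / ε⌉₊, fun n hn3 hN => ?_⟩⟩
  intro Q P H _ hQP hQ hP hH hdeg hfar A hAQ hAP
  have hQn : (3 * #Q : ℝ) = n := by exact_mod_cast (by omega : 3 * #Q = n)
  have hUn : (3 * (2 * n / 3 : ℕ) : ℝ) = 2 * n := by
    exact_mod_cast (by omega : 3 * (2 * n / 3) = 2 * n)
  obtain ⟨U, hUP, hU, hUA⟩ := exists_subset_card_eq_card_sdiff_le (P := P) (k := 2 * n / 3) A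
    (by omega) (x := ε * n / 8) (by positivity) (by linarith)
  refine IsOneThreePartite.le_card_filter_subset hQP hH hUP A hε hρε (by omega) (by omega)
    ?_ ?_ ?_ ?_ ?_ <;> rw [hP]
  · have := (Nat.le_ceil (1 / ε)).trans (Nat.cast_le.2 hN)
    rwa [div_le_iff₀ hε, mul_comm] at this
  · intro u hu v hv
    rw [hU]
    exact hdeg v hv u (hUP hu)
  · rw [hQ]
    exact hfar U (P \ U) disjoint_sdiff (union_sdiff_of_subset hUP) hU
      (by rw [card_sdiff_of_subset hUP, hP, hU]; omega)
  · exact cast_card_sdiff_le (by linarith)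
  · exact hUA
end

section
/- Let k ≥ 2 be an integer, let a > 0 be real, and let H be a k-uniform hypergraph on n vertices. If H contains a cover consisting of at most (1 + a)(n/k) edges, then H contains a matching of size at least (1 − (k−1)a)(n/k). -/
/-- Let `k ≥ 2`, `a > 0`, and `H` a `k`-uniform hypergraph on `n`
vertices (here `Fin n`). If `H` contains a cover of at most `(1 + a)(n/k)` edges,
then `H` contains a matching of size at least `(1 - (k-1)a)(n/k)`. -/
theorem cover_gives_matching (k n : ℕ) (hk : 2 ≤ k) (a : ℝ) (ha : 0 < a)
    (H : Finset (Finset (Fin n))) (huniform : ∀ e ∈ H, e.card = k)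
    (C : Finset (Finset (Fin n))) (hCH : C ⊆ H)
    (hcover : ∀ x : Fin n, ∃ e ∈ C, x ∈ e)
    (hsize : (C.card : ℝ) ≤ (1 + a) * ((n : ℝ) / (k : ℝ))) :
    ∃ M ⊆ H, (∀ e ∈ M, ∀ f ∈ M, e ≠ f → Disjoint e f) ∧
      (1 - ((k : ℝ) - 1) * a) * ((n : ℝ) / (k : ℝ)) ≤ (M.card : ℝ) := by
  classical
  set S := C.powerset.filter (fun M => ∀ e ∈ M, ∀ f ∈ M, e ≠ f → Disjoint e f) with hS
  have hSne : S.Nonempty := ⟨∅, by simp [hS]⟩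
  obtain ⟨M, hMS, hMmax⟩ := S.exists_max_image Finset.card hSne
  simp only [hS, Finset.mem_filter, Finset.mem_powerset] at hMS
  obtain ⟨hMC, hMdisj⟩ := hMS
  refine ⟨M, hMC.trans hCH, hMdisj, ?_⟩
  set U := M.biUnion id with hU
  have hUcard : U.card = k * M.card := by
    have h1 : U.card = ∑ e ∈ M, (id e).card := Finset.card_biUnion hMdisj
    have h2 : ∑ e ∈ M, (id e).card = ∑ _e ∈ M, k :=
      Finset.sum_congr rfl (fun e he => huniform e (hCH (hMC he)))
    rw [h1, h2, Finset.sum_const, smul_eq_mul, mul_comm]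
  have hmeet : ∀ e ∈ C, e ∉ M → ∃ f ∈ M, ¬ Disjoint e f := by
    intro e heC heM
    by_contra h
    push_neg at h
    have hmem : insert e M ∈ S := by
      simp only [hS, Finset.mem_filter, Finset.mem_powerset]
      refine ⟨Finset.insert_subset heC hMC, ?_⟩
      intro x hx y hy hxy
      rw [Finset.mem_insert] at hx hy
      rcases hx with rfl | hx
      · rcases hy with rfl | hy
        · exact absurd rfl hxy
        · exact h y hy
      · rcases hy with rfl | hy
        · exact (h x hx).symm
        · exact hMdisj x hx y hy hxy
    have := hMmax _ hmem
    rw [Finset.card_insert_of_notMem heM] at this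
    omega
  have hcompl : Uᶜ ⊆ (C \ M).biUnion (fun e => e \ U) := by
    intro x hx
    obtain ⟨e, heC, hxe⟩ := hcover x
    have hxU : x ∉ U := Finset.mem_compl.1 hx
    have heM : e ∉ M := fun hh => hxU (Finset.mem_biUnion.2 ⟨e, hh, hxe⟩)
    exact Finset.mem_biUnion.2 ⟨e, Finset.mem_sdiff.2 ⟨heC, heM⟩,
      Finset.mem_sdiff.2 ⟨hxe, hxU⟩⟩
  have hbound : ∀ e ∈ C \ M, (e \ U).card ≤ k - 1 := by
    intro e he
    obtain ⟨heC, heM⟩ := Finset.mem_sdiff.1 he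
    obtain ⟨f, hfM, hef⟩ := hmeet e heC heM
    rw [Finset.not_disjoint_iff] at hef
    obtain ⟨x, hxe, hxf⟩ := hef
    have h1 : 1 ≤ (e ∩ U).card := Finset.card_pos.2
      ⟨x, Finset.mem_inter.2 ⟨hxe, Finset.mem_biUnion.2 ⟨f, hfM, hxf⟩⟩⟩
    have h2 : (e \ U).card + (e ∩ U).card = e.card := Finset.card_sdiff_add_card_inter e U
    have h3 := huniform e (hCH heC)
    omega
  have hUc : Uᶜ.card ≤ (C \ M).card * (k - 1) := by
    calc Uᶜ.card ≤ ((C \ M).biUnion (fun e => e \ U)).card := Finset.card_le_card hcompl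
    _ ≤ ∑ e ∈ C \ M, (e \ U).card := Finset.card_biUnion_le
    _ ≤ ∑ e ∈ C \ M, (k - 1) := Finset.sum_le_sum hbound
    _ = (C \ M).card * (k - 1) := by simp [mul_comm]
  have hcardn : U.card + Uᶜ.card = n := by
    rw [Finset.card_add_card_compl]; simp
  have hcm : M.card ≤ C.card := Finset.card_le_card hMC
  have hsd : (C \ M).card = C.card - M.card := Finset.card_sdiff_of_subset hMC
  have h1k : 1 ≤ k := by omega
  have hnat : n ≤ k * M.card + (C \ M).card * (k - 1) := by
    calc n = U.card + Uᶜ.card := hcardn.symm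
    _ ≤ k * M.card + (C \ M).card * (k - 1) := by
        rw [hUcard]; exact Nat.add_le_add_left hUc _
  have hnatR : (n:ℝ) ≤ (k:ℝ) * (M.card:ℝ) + ((C.card:ℝ) - (M.card:ℝ)) * ((k:ℝ) - 1) := by
    have h := (Nat.cast_le (α := ℝ)).2 hnat
    rw [hsd] at h
    push_cast [Nat.cast_sub hcm, Nat.cast_sub h1k] at h
    exact h
  have hkR : (2:ℝ) ≤ (k:ℝ) := by exact_mod_cast hk
  have hkpos : (0:ℝ) < (k:ℝ) := by linarith
  have hdiv : (k:ℝ) * ((n:ℝ) / (k:ℝ)) = (n:ℝ) := by field_simp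
  nlinarith [mul_nonneg (by linarith : (0:ℝ) ≤ (k:ℝ) - 1)
      (by linarith : (0:ℝ) ≤ (1 + a) * ((n:ℝ) / (k:ℝ)) - (C.card:ℝ)),
    Nat.cast_nonneg (α := ℝ) M.card]
end
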